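/- arXiv:math/0109081 — 4 statements merged into one kernel-verified Lean document; each statement's English description precedes it below -/
import Mathlib

section
/- Let X be a metric space, γ : [a,b) → X a continuous arc such that lim_{t→b} γ(t) does not exist. Then for every finite set {x₁,...,x_N} ⊂ X there exist a sequence {t_i} in [a,b) with t_i → b and open neighbourhoods U_k of x_k (k = 1,...,N) such that γ(t_i) ∉ ⋃_{k=1}^N U_k for all i. -/
open Filter Topology Set

theorem stmt0 {X : Type*} [MetricSpace X] (a b : ℝ) (hab : a < b)
    (γ : ℝ → X) (hγ : ContinuousOn γ (Set.Ico a b))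
    (hnolim : ¬ ∃ x : X, Tendsto γ (𝓝[<] b) (𝓝 x))
    (N : ℕ) (x : Fin N → X) :
    ∃ t : ℕ → ℝ, (∀ i, t i ∈ Set.Ico a b) ∧ Tendsto t atTop (𝓝 b) ∧
      ∃ U : Fin N → Set X, (∀ k, IsOpen (U k) ∧ x k ∈ U k) ∧
        ∀ i, γ (t i) ∉ ⋃ k, U k := by
  -- Main claim: there is r > 0 such that arbitrarily close to b (from the left),
  -- γ stays at distance ≥ r from all the points x k.
  have C : ∃ r > (0:ℝ), ∀ c ∈ Set.Ico a b, ∃ t ∈ Set.Ioo c b,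
      ∀ k, r ≤ dist (γ t) (x k) := by
    classical
    rcases Nat.eq_zero_or_pos N with hN | hN
    · subst hN
      exact ⟨1, one_pos, fun c hc => ⟨(c + b) / 2,
        ⟨by linarith [hc.2], by linarith [hc.2]⟩, fun k => k.elim0⟩⟩
    haveI : Nonempty (Fin N) := ⟨⟨0, hN⟩⟩
    by_contra hcon0
    push_neg at hcon0
    -- hcon0 : ∀ r > 0, ∃ c ∈ Ico a b, ∀ t ∈ Ioo c b, ∃ k, dist (γ t) (x k) < r
    -- Step 1: some x k0 is a cluster value of γ at b⁻.
    have step1 : ∃ k0 : Fin N, ∀ ε > (0:ℝ), ∀ c ∈ Set.Ico a b,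
        ∃ t ∈ Set.Ioo c b, dist (γ t) (x k0) < ε := by
      by_contra hcon
      push_neg at hcon
      choose εf hεf cf hcf hfar using hcon
      set ε : ℝ := Finset.univ.inf' Finset.univ_nonempty εf with hε
      have hεpos : 0 < ε := by
        rw [hε, Finset.lt_inf'_iff]
        exact fun k _ => hεf k
      set c : ℝ := Finset.univ.sup' Finset.univ_nonempty cf with hc
      have hca : a ≤ c := le_trans (hcf (Classical.arbitrary _)).1
        (Finset.le_sup' cf (Finset.mem_univ _))
      have hcb : c < b := by
        rw [hc, Finset.sup'_lt_iff]
        exact fun k _ => (hcf k).2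
      obtain ⟨c', hc', hP⟩ := hcon0 ε hεpos
      set cc : ℝ := max c c' with hcc
      have hccb : cc < b := max_lt hcb hc'.2
      set t : ℝ := (cc + b) / 2 with ht
      have htcc : cc < t := by rw [ht]; linarith
      have htb : t < b := by rw [ht]; linarith
      obtain ⟨k, hk⟩ := hP t ⟨lt_of_le_of_lt (le_max_right c c') htcc, htb⟩
      have h1 : εf k ≤ dist (γ t) (x k) := hfar k t
        ⟨lt_of_le_of_lt (le_trans (Finset.le_sup' cf (Finset.mem_univ k)) (le_max_left c c')) htcc, htb⟩
      have h2 : ε ≤ εf k := Finset.inf'_le εf (Finset.mem_univ k)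
      linarith
    obtain ⟨k0, hk0⟩ := step1
    -- Step 2: γ does not tend to x k0, so frequently it is ε0-far from x k0.
    have hnt : ¬ Tendsto γ (𝓝[<] b) (𝓝 (x k0)) := fun h => hnolim ⟨_, h⟩
    rw [Metric.tendsto_nhds] at hnt
    push_neg at hnt
    obtain ⟨ε0, hε0, hfreq⟩ := hnt
    have step2 : ∀ c, c < b → ∃ t ∈ Set.Ioo c b, ε0 ≤ dist (γ t) (x k0) := by
      intro c hc
      have hmem : Set.Ioo c b ∈ 𝓝[<] b := Ioo_mem_nhdsLT_of_mem ⟨hc, le_refl b⟩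
      obtain ⟨t, ht1, ht2⟩ := (hfreq.and_eventually (eventually_of_mem hmem (fun y hy => hy))).exists
      exact ⟨t, ht2, ht1⟩
    -- define r
    set f : Fin N → ℝ := fun k => if x k = x k0 then ε0 else dist (x k0) (x k) with hf
    have hfpos : ∀ k, 0 < f k := by
      intro k
      rw [hf]
      dsimp only
      split_ifs with h
      · exact hε0
      · exact dist_pos.mpr (fun he => h he.symm)
    set r : ℝ := Finset.univ.inf' Finset.univ_nonempty f / 2 with hr
    have hrpos : 0 < r := by
      rw [hr]
      have : 0 < Finset.univ.inf' Finset.univ_nonempty f := by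
        rw [Finset.lt_inf'_iff]; exact fun k _ => hfpos k
      linarith
    have hr2 : ∀ k, 2 * r ≤ f k := by
      intro k
      rw [hr]
      have := Finset.inf'_le f (Finset.mem_univ k)
      linarith
    -- use hcon0 with r
    obtain ⟨c', hc', hP⟩ := hcon0 r hrpos
    -- find t1 close to x k0, t2 far, both beyond c'
    obtain ⟨t1, ht1m, ht1⟩ := hk0 r hrpos c' hc'
    obtain ⟨t2, ht2m, ht2⟩ := step2 c' hc'.2
    -- IVT on the distance function
    have hIoo : Set.uIcc t1 t2 ⊆ Set.Ioo c' b :=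
      Set.ordConnected_Ioo.uIcc_subset ht1m ht2m
    have hIco : Set.uIcc t1 t2 ⊆ Set.Ico a b := fun y hy =>
      ⟨le_of_lt (lt_of_le_of_lt hc'.1 (hIoo hy).1), (hIoo hy).2⟩
    have hgcont : ContinuousOn (fun s => dist (γ s) (x k0)) (Set.uIcc t1 t2) :=
      (continuous_id.dist continuous_const).comp_continuousOn (hγ.mono hIco)
    have hrε0 : r < ε0 := by have := hr2 k0; rw [hf] at this; simp at this; linarith
    have hrmem : r ∈ Set.uIcc (dist (γ t1) (x k0)) (dist (γ t2) (x k0)) := by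
      rw [Set.uIcc_of_le (by linarith)]
      exact ⟨le_of_lt ht1, by linarith⟩
    obtain ⟨t, htm, hgt'⟩ := intermediate_value_uIcc hgcont hrmem
    have hgt : dist (γ t) (x k0) = r := hgt'
    obtain ⟨k, hk⟩ := hP t (hIoo htm)
    -- but dist (γ t) (x k) ≥ r for all k : contradiction
    have : r ≤ dist (γ t) (x k) := by
      by_cases hxx : x k = x k0
      · rw [hxx, hgt]
      · have h1 : 2 * r ≤ dist (x k0) (x k) := by
          have := hr2 k; rw [hf] at this; simp only [if_neg hxx] at this; exact this
        have h2 : dist (x k0) (x k) ≤ dist (x k0) (γ t) + dist (γ t) (x k) := dist_triangle _ _ _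
        have h3 : dist (x k0) (γ t) = r := by rw [dist_comm]; exact hgt
        linarith
    linarith
  -- Now build the sequence from C.
  obtain ⟨r, hrpos, hC⟩ := C
  set c : ℕ → ℝ := fun i => b - (b - a) / (i + 1) with hcdef
  have hcmem : ∀ i, c i ∈ Set.Ico a b := by
    intro i
    constructor
    · rw [hcdef]
      dsimp only
      have h1 : (b - a) / (i + 1 : ℝ) ≤ b - a := by
        apply div_le_self (by linarith)
        have : (0:ℝ) ≤ i := Nat.cast_nonneg i
        linarith
      linarith
    · rw [hcdef]
      dsimp only
      have : (0:ℝ) < (b - a) / (i + 1) := by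
        apply div_pos (by linarith)
        have : (0:ℝ) ≤ i := Nat.cast_nonneg i
        linarith
      linarith
  choose t htm htfar using fun i => hC (c i) (hcmem i)
  have hclim : Tendsto c atTop (𝓝 b) := by
    rw [hcdef]
    have h1 : Tendsto (fun i : ℕ => (b - a) / (i + 1)) atTop (𝓝 0) := by
      have := tendsto_one_div_add_atTop_nhds_zero_nat (𝕜 := ℝ)
      have h2 := this.const_mul (b - a)
      simp only [mul_one_div] at h2
      simpa using h2
    have := tendsto_const_nhds (α := ℕ) (x := b) (f := atTop) |>.sub h1
    simpa using this
  refine ⟨t, fun i => ⟨le_of_lt (lt_of_le_of_lt (hcmem i).1 (htm i).1), (htm i).2⟩, ?_,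
    fun k => Metric.ball (x k) r, fun k => ⟨Metric.isOpen_ball, Metric.mem_ball_self hrpos⟩, ?_⟩
  · exact tendsto_of_tendsto_of_tendsto_of_le_of_le hclim tendsto_const_nhds
      (fun i => le_of_lt (htm i).1) (fun i => le_of_lt (htm i).2)
  · intro i hi
    rw [Set.mem_iUnion] at hi
    obtain ⟨k, hk⟩ := hi
    rw [Metric.mem_ball] at hk
    exact absurd hk (not_lt.mpr (htfar i k))
end

section
/- Let F be a ℂ-valued function holomorphic on a neighbourhood of the closed bidisc {(w,z) : |w - w₀| ≤ a, |z - z₀| ≤ a}, with |F| ≤ M there and with the partial derivative ∂F/∂w bounded in absolute value by K. If r < min(a, b/M, 1/K) (with b ≤ a the radius in the w-variable), then there exists a unique holomorphic function W : D(z₀, r) → D(w₀, b) with W(z₀) = w₀ and W'(z) = F(W(z), z) for all z ∈ D(z₀, r). -/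
open Metric Set intervalIntegral MeasureTheory
open scoped Interval

private lemma hasDerivAt_line {g : ℂ → ℂ} {d : ℂ} (c v : ℂ) (t : ℝ)
    (hg : HasDerivAt g d (c + (t : ℂ) * v)) :
    HasDerivAt (fun s : ℝ => g (c + (s : ℂ) * v)) (v * d) t := by
  have h1 : HasDerivAt (fun s : ℝ => c + (s : ℂ) * v) v t := by
    simpa using (((hasDerivAt_id t).ofReal_comp).mul_const v).const_add c
  have h2 := (hg.hasFDerivAt.restrictScalars ℝ).comp_hasDerivAt t h1
  simpa [Function.comp_def, smul_eq_mul, mul_comm] using h2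

/-- segment points stay in the ball -/
private lemma seg_mem {c : ℂ} {s : ℝ} {x : ℂ} (hx : x ∈ ball c s) {t : ℝ}
    (ht : t ∈ Icc (0:ℝ) 1) : c + (t : ℂ) * (x - c) ∈ ball c s := by
  rw [mem_ball] at hx ⊢
  rw [dist_eq_norm] at hx ⊢
  calc ‖c + (t:ℂ) * (x - c) - c‖ = |t| * ‖x - c‖ := by
        simp [norm_mul, Complex.norm_real]
    _ ≤ 1 * ‖x - c‖ := by
        gcongr
        rw [abs_le]; constructor <;> linarith [ht.1, ht.2]
    _ < s := by simpa using hx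

private lemma ftc_segment {u f : ℂ → ℂ} {c : ℂ} {s : ℝ}
    (hu : ∀ w ∈ ball c s, HasDerivAt u (f w) w)
    (hf : ContinuousOn f (ball c s)) {z : ℂ} (hz : z ∈ ball c s) :
    u z = u c + ∫ t in (0:ℝ)..1, (z - c) * f (c + (t : ℂ) * (z - c)) := by
  have hc : c ∈ ball c s := by
    rw [mem_ball, dist_self]
    exact lt_of_le_of_lt dist_nonneg (mem_ball.1 hz)
  have hseg : ∀ t ∈ Icc (0:ℝ) 1, c + (t:ℂ) * (z - c) ∈ ball c s :=
    fun t ht => seg_mem hz ht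
  have hline : Continuous (fun t : ℝ => c + (t:ℂ) * (z - c)) := by
    continuity
  have hderiv : ∀ t ∈ uIcc (0:ℝ) 1,
      HasDerivAt (fun t : ℝ => u (c + (t:ℂ) * (z - c)))
        ((z - c) * f (c + (t:ℂ) * (z - c))) t := by
    intro t ht
    rw [uIcc_of_le (by norm_num : (0:ℝ) ≤ 1)] at ht
    exact hasDerivAt_line c (z - c) t (hu _ (hseg t ht))
  have hint : IntervalIntegrable
      (fun t : ℝ => (z - c) * f (c + (t:ℂ) * (z - c))) volume 0 1 := by
    apply ContinuousOn.intervalIntegrable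
    rw [uIcc_of_le (by norm_num : (0:ℝ) ≤ 1)]
    exact continuousOn_const.mul ((hf.comp hline.continuousOn) hseg)
  have := integral_eq_sub_of_hasDerivAt hderiv hint
  rw [this]
  simp

private lemma seg_mem_closed {c : ℂ} {s : ℝ} {x : ℂ} (hx : x ∈ closedBall c s) {t : ℝ}
    (ht : t ∈ Icc (0:ℝ) 1) : c + (t : ℂ) * (x - c) ∈ closedBall c s := by
  rw [mem_closedBall] at hx ⊢
  rw [dist_eq_norm] at hx ⊢
  calc ‖c + (t:ℂ) * (x - c) - c‖ = |t| * ‖x - c‖ := by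
        simp [norm_mul, Complex.norm_real]
    _ ≤ 1 * ‖x - c‖ := by
        apply mul_le_mul_of_nonneg_right _ (norm_nonneg _)
        rw [abs_le]; constructor <;> linarith [ht.1, ht.2]
    _ ≤ s := by simpa using hx

private lemma hasDerivAt_primitive {g : ℂ → ℂ} {c : ℂ} {s : ℝ}
    (hg : DifferentiableOn ℂ g (ball c s)) {z : ℂ} (hz : z ∈ ball c s) :
    HasDerivAt (fun x : ℂ => ∫ t in (0:ℝ)..1, (x - c) * g (c + (t:ℂ) * (x - c)))
      (g z) z := by
  have hs0 : 0 < s := lt_of_le_of_lt dist_nonneg (mem_ball.1 hz)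
  have hopen : IsOpen (ball c s) := isOpen_ball
  have hganal : AnalyticOnNhd ℂ g (ball c s) := hg.analyticOnNhd hopen
  have hg' : DifferentiableOn ℂ (deriv g) (ball c s) :=
    (hganal.deriv).differentiableOn
  -- radius setup
  set ρ : ℝ := (dist z c + s) / 2 with hρdef
  have hρ1 : dist z c < ρ := by
    rw [hρdef]; have := mem_ball.1 hz; linarith
  have hρ2 : ρ < s := by rw [hρdef]; have := mem_ball.1 hz; linarith
  have hρ0 : 0 < ρ := lt_of_le_of_lt dist_nonneg hρ1
  have hsub : closedBall c ρ ⊆ ball c s := closedBall_subset_ball hρ2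
  set ε : ℝ := ρ - dist z c with hεdef
  have hε0 : 0 < ε := by rw [hεdef]; linarith
  -- membership lemma
  have hmem : ∀ x ∈ ball z ε, ∀ t ∈ Icc (0:ℝ) 1, c + (t:ℂ) * (x - c) ∈ closedBall c ρ := by
    intro x hx t ht
    rw [mem_closedBall, dist_eq_norm]
    have hxc : ‖x - c‖ ≤ ρ := by
      have he : x - c = (x - z) + (z - c) := by ring
      have h1 : ‖x - z‖ < ε := by rw [← dist_eq_norm]; exact mem_ball.1 hx
      have h2 : ‖z - c‖ = dist z c := (dist_eq_norm z c).symm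
      calc ‖x - c‖ ≤ ‖x - z‖ + ‖z - c‖ := he ▸ norm_add_le _ _
        _ ≤ ρ := by rw [h2]; rw [hεdef] at h1; linarith
    calc ‖c + (t:ℂ) * (x - c) - c‖ = |t| * ‖x - c‖ := by simp [norm_mul]
      _ ≤ 1 * ρ := by
          apply mul_le_mul _ hxc (norm_nonneg _) zero_le_one
          rw [abs_le]; constructor <;> linarith [ht.1, ht.2]
      _ = ρ := one_mul ρ
  -- bounds on g and deriv g
  obtain ⟨C₁, hC₁⟩ := (isCompact_closedBall c ρ).exists_bound_of_continuousOn
    (hg.continuousOn.mono hsub)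
  obtain ⟨C₂, hC₂⟩ := (isCompact_closedBall c ρ).exists_bound_of_continuousOn
    (hg'.continuousOn.mono hsub)
  have hC₁0 : 0 ≤ C₁ := le_trans (norm_nonneg _) (hC₁ c (mem_closedBall_self hρ0.le))
  have hC₂0 : 0 ≤ C₂ := le_trans (norm_nonneg _) (hC₂ c (mem_closedBall_self hρ0.le))
  set F' : ℂ → ℝ → ℂ := fun x t =>
    g (c + (t:ℂ) * (x - c)) + (x - c) * ((t:ℂ) * deriv g (c + (t:ℂ) * (x - c)))
  have hIsub : Ι (0:ℝ) 1 ⊆ Icc (0:ℝ) 1 := by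
    rw [uIoc_of_le (by norm_num : (0:ℝ) ≤ 1)]; exact Ioc_subset_Icc_self
  have hlinecont : ∀ x : ℂ, Continuous (fun t : ℝ => c + (t:ℂ) * (x - c)) := by
    intro x; continuity
  have hcont : ∀ x ∈ ball z ε, ContinuousOn (fun t : ℝ => (x - c) * g (c + (t:ℂ) * (x - c)))
      (Icc (0:ℝ) 1) := by
    intro x hx
    exact continuousOn_const.mul (((hg.continuousOn.mono hsub).comp
      (hlinecont x).continuousOn) (fun t ht => hmem x hx t ht))
  have hcont' : ∀ x ∈ ball z ε, ContinuousOn (F' x) (Icc (0:ℝ) 1) := by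
    intro x hx
    apply ContinuousOn.add
    · exact ((hg.continuousOn.mono hsub).comp (hlinecont x).continuousOn)
        (fun t ht => hmem x hx t ht)
    · exact continuousOn_const.mul (Complex.continuous_ofReal.continuousOn.mul
        (((hg'.continuousOn.mono hsub).comp (hlinecont x).continuousOn)
          (fun t ht => hmem x hx t ht)))
  have hzmem : z ∈ ball z ε := mem_ball_self hε0
  have key := hasDerivAt_integral_of_dominated_loc_of_deriv_le (μ := volume)
    (F := fun x t => (x - c) * g (c + (t:ℂ) * (x - c))) (F' := F') (x₀ := z)
    (a := 0) (b := 1) (bound := fun _ => C₁ + ρ * C₂) (ball_mem_nhds z hε0)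
    ?_ ?_ ?_ ?_ ?_ ?_
  · -- conclude
    have h2 : (∫ t in (0:ℝ)..1, F' z t) = g z := by
      have hderiv : ∀ t ∈ uIcc (0:ℝ) 1,
          HasDerivAt (fun t : ℝ => (t:ℂ) * g (c + (t:ℂ) * (z - c))) (F' z t) t := by
        intro t ht
        rw [uIcc_of_le (by norm_num : (0:ℝ) ≤ 1)] at ht
        have hpt : c + (t:ℂ) * (z - c) ∈ ball c s := hsub (hmem z hzmem t ht)
        have hgd : HasDerivAt g (deriv g (c + (t:ℂ) * (z - c))) (c + (t:ℂ) * (z - c)) :=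
          (hg.differentiableAt (hopen.mem_nhds hpt)).hasDerivAt
        have h3 := hasDerivAt_line c (z - c) t hgd
        have h4 : HasDerivAt (fun t : ℝ => (t:ℂ)) 1 t := by
          simpa using (hasDerivAt_id t).ofReal_comp
        have h5 := h4.mul h3
        convert h5 using 1
        · rfl
        · rfl
        simp only [F']
        ring
      have hint : IntervalIntegrable (F' z) volume 0 1 := by
        apply ContinuousOn.intervalIntegrable
        rw [uIcc_of_le (by norm_num : (0:ℝ) ≤ 1)]
        exact hcont' z hzmem
      have := integral_eq_sub_of_hasDerivAt hderiv hint
      rw [this]; simp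
    rw [h2] at key
    exact key.2
  · -- hF_meas
    filter_upwards [ball_mem_nhds z hε0] with x hx
    exact ((hcont x hx).mono hIsub).aestronglyMeasurable measurableSet_uIoc
  · -- hF_int
    apply ContinuousOn.intervalIntegrable
    rw [uIcc_of_le (by norm_num : (0:ℝ) ≤ 1)]
    exact hcont z hzmem
  · -- hF'_meas
    exact ((hcont' z hzmem).mono hIsub).aestronglyMeasurable measurableSet_uIoc
  · -- h_bound
    apply Filter.Eventually.of_forall
    intro t ht x hx
    have ht' : t ∈ Icc (0:ℝ) 1 := hIsub ht
    have hpt := hmem x hx t ht'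
    have hxc : ‖x - c‖ ≤ ρ := by
      have := mem_closedBall.1 (hmem x hx 1 (by norm_num))
      rw [dist_eq_norm] at this
      simpa using this
    calc ‖F' x t‖ ≤ ‖g (c + (t:ℂ) * (x - c))‖ +
          ‖(x - c) * ((t:ℂ) * deriv g (c + (t:ℂ) * (x - c)))‖ := norm_add_le _ _
      _ ≤ C₁ + ρ * C₂ := by
          gcongr
          · exact hC₁ _ hpt
          · rw [norm_mul, norm_mul]
            have h6 : ‖(t:ℂ)‖ ≤ 1 := by
              rw [Complex.norm_real]
              rw [Real.norm_eq_abs, abs_le]; constructor <;> linarith [ht'.1, ht'.2]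
            calc ‖x - c‖ * (‖(t:ℂ)‖ * ‖deriv g (c + (t:ℂ) * (x - c))‖)
                ≤ ρ * (1 * C₂) := by
                  apply mul_le_mul hxc _ (mul_nonneg (norm_nonneg _) (norm_nonneg _)) hρ0.le
                  exact mul_le_mul h6 (hC₂ _ hpt) (norm_nonneg _) zero_le_one
              _ = ρ * C₂ := by ring
  · exact intervalIntegrable_const
  · -- h_diff
    apply Filter.Eventually.of_forall
    intro t ht x hx
    have ht' : t ∈ Icc (0:ℝ) 1 := hIsub ht
    have hpt : c + (t:ℂ) * (x - c) ∈ ball c s := hsub (hmem x hx t ht')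
    have hgd : HasDerivAt g (deriv g (c + (t:ℂ) * (x - c))) (c + (t:ℂ) * (x - c)) :=
      (hg.differentiableAt (hopen.mem_nhds hpt)).hasDerivAt
    have hinner : HasDerivAt (fun x : ℂ => c + (t:ℂ) * (x - c)) (t:ℂ) x := by
      simpa using (((hasDerivAt_id x).sub_const c).const_mul (t:ℂ)).const_add c
    have hcomp := hgd.comp x hinner
    have hmul := ((hasDerivAt_id x).sub_const c).mul hcomp
    convert hmul using 1
    · rfl
    · rfl
    simp only [F', Function.comp_def, id]
    ring

noncomputable def picardIter (F : ℂ → ℂ → ℂ) (w₀ z₀ : ℂ) : ℕ → ℂ → ℂ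
  | 0 => fun _ => w₀
  | n+1 => fun z => w₀ + ∫ t in (0:ℝ)..1,
      (z - z₀) * F (picardIter F w₀ z₀ n (z₀ + (t:ℂ) * (z - z₀))) (z₀ + (t:ℂ) * (z - z₀))

/-- Existence and uniqueness theorem for holomorphic ODEs. -/
theorem stmt2 (F : ℂ → ℂ → ℂ) (w₀ z₀ : ℂ) (a b M K r : ℝ)
    (ha : 0 < a) (hb : 0 < b) (hba : b ≤ a) (hM : 0 < M) (hK : 0 < K)
    (hF : DifferentiableOn ℂ (fun p : ℂ × ℂ => F p.1 p.2)
      (Metric.ball w₀ b ×ˢ Metric.ball z₀ a))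
    (hFbd : ∀ w ∈ Metric.ball w₀ b, ∀ z ∈ Metric.ball z₀ a, ‖F w z‖ ≤ M)
    (hFderiv : ∀ w ∈ Metric.ball w₀ b, ∀ z ∈ Metric.ball z₀ a,
      ‖deriv (fun w' => F w' z) w‖ ≤ K)
    (hr : 0 < r) (hra : r < min a (min (b / M) (1 / K))) :
    ∃ W : ℂ → ℂ,
      (DifferentiableOn ℂ W (Metric.ball z₀ r) ∧
        (∀ z ∈ Metric.ball z₀ r, W z ∈ Metric.ball w₀ b) ∧
        W z₀ = w₀ ∧
        (∀ z ∈ Metric.ball z₀ r, HasDerivAt W (F (W z) z) z)) ∧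
      ∀ W' : ℂ → ℂ,
        (DifferentiableOn ℂ W' (Metric.ball z₀ r) ∧
          (∀ z ∈ Metric.ball z₀ r, W' z ∈ Metric.ball w₀ b) ∧
          W' z₀ = w₀ ∧
          (∀ z ∈ Metric.ball z₀ r, HasDerivAt W' (F (W' z) z) z)) →
        ∀ z ∈ Metric.ball z₀ r, W' z = W z := by
  -- unpack the radius hypotheses
  rw [lt_min_iff, lt_min_iff] at hra
  have hr_a : r < a := hra.1
  have hr_bM : r < b / M := hra.2.1
  have hr_K : r < 1 / K := hra.2.2
  set r₁ : ℝ := (r + min a (min (b / M) (1 / K))) / 2 with hr₁def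
  have hrr₁ : r < r₁ := by
    rw [hr₁def]
    have h1 : r < min a (min (b / M) (1 / K)) := by
      rw [lt_min_iff, lt_min_iff]; exact ⟨hr_a, hr_bM, hr_K⟩
    linarith
  have hr₁lt : r₁ < min a (min (b / M) (1 / K)) := by
    rw [hr₁def]
    have h1 : r < min a (min (b / M) (1 / K)) := by
      rw [lt_min_iff, lt_min_iff]; exact ⟨hr_a, hr_bM, hr_K⟩
    linarith
  rw [lt_min_iff, lt_min_iff] at hr₁lt
  have hr₁a : r₁ < a := hr₁lt.1
  have hr₁bM : r₁ < b / M := hr₁lt.2.1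
  have hr₁K : r₁ < 1 / K := hr₁lt.2.2
  have hr₁0 : 0 < r₁ := hr.trans hrr₁
  have hMr₁ : M * r₁ < b := by
    rw [lt_div_iff₀ hM] at hr₁bM; linarith
  set q : ℝ := K * r₁ with hqdef
  have hq0 : 0 ≤ q := mul_nonneg hK.le hr₁0.le
  have hq1 : q < 1 := by
    rw [lt_div_iff₀ hK] at hr₁K; rw [hqdef]; linarith
  have hKr : K * r < 1 := by
    rw [lt_div_iff₀ hK] at hr_K; linarith
  -- subset facts
  have hball_a : ball z₀ r₁ ⊆ ball z₀ a := ball_subset_ball hr₁a.le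
  have hcb_b : closedBall w₀ (M * r₁) ⊆ ball w₀ b := closedBall_subset_ball hMr₁
  have hball_r : ball z₀ r ⊆ ball z₀ r₁ := ball_subset_ball hrr₁.le
  have habs : ∀ w : ℂ, ‖w‖ = ‖w‖ := fun w => rfl
  -- Lipschitz in w
  have hFw : ∀ z ∈ ball z₀ a, DifferentiableOn ℂ (fun w => F w z) (ball w₀ b) := by
    intro z hzz
    have heq : (fun w => F w z) = (fun p : ℂ × ℂ => F p.1 p.2) ∘ (fun w => (w, z)) := rfl
    rw [heq]
    exact hF.comp ((differentiable_id.prodMk (differentiable_const z)).differentiableOn)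
      (fun w hw => ⟨hw, hzz⟩)
  have hLip : ∀ z ∈ ball z₀ a, ∀ w₁ ∈ ball w₀ b, ∀ w₂ ∈ ball w₀ b,
      ‖F w₁ z - F w₂ z‖ ≤ K * ‖w₁ - w₂‖ := by
    intro z hzz w₁ h1 w₂ h2
    apply (convex_ball w₀ b).norm_image_sub_le_of_norm_hasDerivWithin_le
      (f' := fun w => deriv (fun w' => F w' z) w) ?_ ?_ h2 h1
    · intro w hw
      exact (((hFw z hzz).differentiableAt (isOpen_ball.mem_nhds hw)).hasDerivAt).hasDerivWithinAt
    · intro w hw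
      rw [← habs]; exact hFderiv w hw z hzz
  have hFc : ContinuousOn (fun p : ℂ × ℂ => F p.1 p.2) (ball w₀ b ×ˢ ball z₀ a) :=
    hF.continuousOn
  -- composite continuity / differentiability helpers
  have hgC : ∀ (s' : ℝ), s' ≤ a → ∀ W : ℂ → ℂ, ContinuousOn W (ball z₀ s') →
      (∀ x ∈ ball z₀ s', W x ∈ ball w₀ b) →
      ContinuousOn (fun ζ => F (W ζ) ζ) (ball z₀ s') := by
    intro s' hs' W hWc hWv
    have heq : (fun ζ => F (W ζ) ζ) = (fun p : ℂ × ℂ => F p.1 p.2) ∘ (fun ζ => (W ζ, ζ)) := rfl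
    rw [heq]
    exact hFc.comp (hWc.prodMk continuousOn_id)
      (fun ζ hζ => ⟨hWv ζ hζ, ball_subset_ball hs' hζ⟩)
  have hgD : ∀ W : ℂ → ℂ, DifferentiableOn ℂ W (ball z₀ r₁) →
      (∀ x ∈ ball z₀ r₁, W x ∈ ball w₀ b) →
      DifferentiableOn ℂ (fun ζ => F (W ζ) ζ) (ball z₀ r₁) := by
    intro W hWd hWv
    have heq : (fun ζ => F (W ζ) ζ) = (fun p : ℂ × ℂ => F p.1 p.2) ∘ (fun ζ => (W ζ, ζ)) := rfl
    rw [heq]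
    exact hF.comp (hWd.prodMk differentiableOn_id)
      (fun ζ hζ => ⟨hWv ζ hζ, hball_a hζ⟩)
  have hline : ∀ z : ℂ, Continuous (fun t : ℝ => z₀ + (t:ℂ) * (z - z₀)) := by
    intro z
    exact continuous_const.add (Complex.continuous_ofReal.mul continuous_const)
  have hIsub : Ι (0:ℝ) 1 ⊆ Icc (0:ℝ) 1 := by
    rw [uIoc_of_le (by norm_num : (0:ℝ) ≤ 1)]; exact Ioc_subset_Icc_self
  have hIcont : ∀ (s' : ℝ), s' ≤ a → ∀ W : ℂ → ℂ, ContinuousOn W (ball z₀ s') →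
      (∀ x ∈ ball z₀ s', W x ∈ ball w₀ b) → ∀ z ∈ ball z₀ s',
      ContinuousOn (fun t : ℝ => (z - z₀) * F (W (z₀ + (t:ℂ) * (z - z₀))) (z₀ + (t:ℂ) * (z - z₀)))
        (Icc (0:ℝ) 1) := by
    intro s' hs' W hWc hWv z hz
    exact continuousOn_const.mul
      (((hgC s' hs' W hWc hWv).comp (hline z).continuousOn) (fun t ht => seg_mem hz ht))
  have hIint : ∀ (s' : ℝ), s' ≤ a → ∀ W : ℂ → ℂ, ContinuousOn W (ball z₀ s') →
      (∀ x ∈ ball z₀ s', W x ∈ ball w₀ b) → ∀ z ∈ ball z₀ s',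
      IntervalIntegrable
        (fun t : ℝ => (z - z₀) * F (W (z₀ + (t:ℂ) * (z - z₀))) (z₀ + (t:ℂ) * (z - z₀)))
        volume 0 1 := by
    intro s' hs' W hWc hWv z hz
    apply ContinuousOn.intervalIntegrable
    rw [uIcc_of_le (by norm_num : (0:ℝ) ≤ 1)]
    exact hIcont s' hs' W hWc hWv z hz
  set P : ℕ → ℂ → ℂ := picardIter F w₀ z₀ with hPdef
  -- basic induction: differentiability and values
  have hIter : ∀ n : ℕ, DifferentiableOn ℂ (P n) (ball z₀ r₁) ∧
      ∀ z ∈ ball z₀ r₁, P n z ∈ closedBall w₀ (M * r₁) := by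
    intro n
    induction n with
    | zero =>
      constructor
      · exact differentiableOn_const w₀
      · intro z hz
        exact mem_closedBall_self (mul_nonneg hM.le hr₁0.le)
    | succ n ih =>
      have hval : ∀ x ∈ ball z₀ r₁, P n x ∈ ball w₀ b := fun x hx => hcb_b (ih.2 x hx)
      have hgd := hgD (P n) ih.1 hval
      have hder : ∀ z ∈ ball z₀ r₁, HasDerivAt (P (n+1)) (F (P n z) z) z := by
        intro z hz
        exact (hasDerivAt_primitive hgd hz).const_add w₀
      constructor
      · exact fun z hz => ((hder z hz).differentiableAt).differentiableWithinAt
      · intro z hz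
        rw [mem_closedBall, dist_eq_norm]
        have hexp : P (n+1) z - w₀ = ∫ t in (0:ℝ)..1,
            (z - z₀) * F (P n (z₀ + (t:ℂ) * (z - z₀))) (z₀ + (t:ℂ) * (z - z₀)) := by
          show (w₀ + _) - w₀ = _
          ring
        rw [hexp]
        have hbd : ∀ t ∈ Ι (0:ℝ) 1,
            ‖(z - z₀) * F (P n (z₀ + (t:ℂ) * (z - z₀))) (z₀ + (t:ℂ) * (z - z₀))‖ ≤ r₁ * M := by
          intro t ht
          have ht' := hIsub ht
          have hseg := seg_mem hz ht'
          rw [norm_mul]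
          have h1 : ‖z - z₀‖ ≤ r₁ := by
            rw [← dist_eq_norm]; exact (mem_ball.1 hz).le
          have h2 : ‖F (P n (z₀ + (t:ℂ) * (z - z₀))) (z₀ + (t:ℂ) * (z - z₀))‖ ≤ M := by
            rw [← habs]
            exact hFbd _ (hval _ hseg) _ (hball_a hseg)
          exact mul_le_mul h1 h2 (norm_nonneg _) hr₁0.le
        calc ‖∫ t in (0:ℝ)..1, (z - z₀) * F (P n (z₀ + (t:ℂ) * (z - z₀)))
              (z₀ + (t:ℂ) * (z - z₀))‖ ≤ r₁ * M * |1 - 0| :=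
              norm_integral_le_of_norm_le_const hbd
          _ = M * r₁ := by norm_num; ring
  have hPcont : ∀ n, ContinuousOn (P n) (ball z₀ r₁) := fun n => (hIter n).1.continuousOn
  have hPval : ∀ n, ∀ x ∈ ball z₀ r₁, P n x ∈ ball w₀ b :=
    fun n x hx => hcb_b ((hIter n).2 x hx)
  -- geometric estimate
  have hEst : ∀ n : ℕ, ∀ z ∈ ball z₀ r₁, dist (P n z) (P (n+1) z) ≤ (M * r₁) * q ^ n := by
    intro n
    induction n with
    | zero =>
      intro z hz
      have h0 : P 0 z = w₀ := rfl
      rw [h0, dist_comm, dist_eq_norm]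
      have hexp : P 1 z - w₀ = ∫ t in (0:ℝ)..1,
          (z - z₀) * F (P 0 (z₀ + (t:ℂ) * (z - z₀))) (z₀ + (t:ℂ) * (z - z₀)) := by
        show (w₀ + _) - w₀ = _
        ring
      rw [hexp]
      have hbd : ∀ t ∈ Ι (0:ℝ) 1,
          ‖(z - z₀) * F (P 0 (z₀ + (t:ℂ) * (z - z₀))) (z₀ + (t:ℂ) * (z - z₀))‖ ≤ r₁ * M := by
        intro t ht
        have ht' := hIsub ht
        have hseg := seg_mem hz ht'
        rw [norm_mul]
        have h1 : ‖z - z₀‖ ≤ r₁ := by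
          rw [← dist_eq_norm]; exact (mem_ball.1 hz).le
        have h2 : ‖F (P 0 (z₀ + (t:ℂ) * (z - z₀))) (z₀ + (t:ℂ) * (z - z₀))‖ ≤ M := by
          rw [← habs]
          exact hFbd _ (hPval 0 _ hseg) _ (hball_a hseg)
        exact mul_le_mul h1 h2 (norm_nonneg _) hr₁0.le
      calc ‖∫ t in (0:ℝ)..1, (z - z₀) * F (P 0 (z₀ + (t:ℂ) * (z - z₀)))
            (z₀ + (t:ℂ) * (z - z₀))‖ ≤ r₁ * M * |1 - 0| :=
            norm_integral_le_of_norm_le_const hbd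
        _ = M * r₁ * q ^ 0 := by norm_num; ring
    | succ n ih =>
      intro z hz
      have hexp1 : P (n+1) z = w₀ + ∫ t in (0:ℝ)..1,
          (z - z₀) * F (P n (z₀ + (t:ℂ) * (z - z₀))) (z₀ + (t:ℂ) * (z - z₀)) := rfl
      have hexp2 : P (n+2) z = w₀ + ∫ t in (0:ℝ)..1,
          (z - z₀) * F (P (n+1) (z₀ + (t:ℂ) * (z - z₀))) (z₀ + (t:ℂ) * (z - z₀)) := rfl
      rw [hexp1, hexp2, dist_add_left, dist_eq_norm,
        ← intervalIntegral.integral_sub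
          (hIint r₁ hr₁a.le (P n) (hPcont n) (hPval n) z hz)
          (hIint r₁ hr₁a.le (P (n+1)) (hPcont (n+1)) (hPval (n+1)) z hz)]
      have hbd : ∀ t ∈ Ι (0:ℝ) 1,
          ‖(z - z₀) * F (P n (z₀ + (t:ℂ) * (z - z₀))) (z₀ + (t:ℂ) * (z - z₀)) -
            (z - z₀) * F (P (n+1) (z₀ + (t:ℂ) * (z - z₀))) (z₀ + (t:ℂ) * (z - z₀))‖ ≤
          (M * r₁) * q ^ (n+1) := by
        intro t ht
        have ht' := hIsub ht
        have hseg := seg_mem hz ht'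
        rw [← mul_sub, norm_mul]
        have h1 : ‖z - z₀‖ ≤ r₁ := by
          rw [← dist_eq_norm]; exact (mem_ball.1 hz).le
        have h2 := hLip _ (hball_a hseg) _ (hPval n _ hseg) _ (hPval (n+1) _ hseg)
        have h3 : ‖P n (z₀ + (t:ℂ) * (z - z₀)) - P (n+1) (z₀ + (t:ℂ) * (z - z₀))‖ ≤
            (M * r₁) * q ^ n := by
          rw [← dist_eq_norm]; exact ih _ hseg
        calc ‖z - z₀‖ * ‖F (P n (z₀ + (t:ℂ) * (z - z₀))) (z₀ + (t:ℂ) * (z - z₀)) -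
              F (P (n+1) (z₀ + (t:ℂ) * (z - z₀))) (z₀ + (t:ℂ) * (z - z₀))‖ ≤
            r₁ * (K * ((M * r₁) * q ^ n)) := by
              apply mul_le_mul h1 _ (norm_nonneg _) hr₁0.le
              exact h2.trans (by
                apply mul_le_mul_of_nonneg_left h3 hK.le)
          _ = (M * r₁) * q ^ (n+1) := by rw [hqdef]; ring
      calc ‖∫ t in (0:ℝ)..1, ((z - z₀) * F (P n (z₀ + (t:ℂ) * (z - z₀)))
            (z₀ + (t:ℂ) * (z - z₀)) - (z - z₀) * F (P (n+1) (z₀ + (t:ℂ) * (z - z₀)))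
            (z₀ + (t:ℂ) * (z - z₀)))‖ ≤ (M * r₁) * q ^ (n+1) * |1 - 0| :=
            norm_integral_le_of_norm_le_const hbd
        _ = (M * r₁) * q ^ (n+1) := by norm_num
  -- the limit function
  set Wl : ℂ → ℂ := fun z => Filter.limUnder Filter.atTop (fun n => P n z) with hWldef
  have htend : ∀ z ∈ ball z₀ r₁, Filter.Tendsto (fun n => P n z) Filter.atTop (nhds (Wl z)) := by
    intro z hz
    exact (cauchySeq_of_le_geometric q (M * r₁) hq1 (fun n => hEst n z hz)).tendsto_limUnder
  have hdistW : ∀ n : ℕ, ∀ z ∈ ball z₀ r₁,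
      dist (P n z) (Wl z) ≤ (M * r₁) * q ^ n / (1 - q) := by
    intro n z hz
    exact dist_le_of_le_geometric_of_tendsto q (M * r₁) hq1
      (fun m => hEst m z hz) (htend z hz) n
  have hblim : Filter.Tendsto (fun n : ℕ => (M * r₁) * q ^ n / (1 - q))
      Filter.atTop (nhds 0) := by
    have h1 := tendsto_pow_atTop_nhds_zero_of_lt_one hq0 hq1
    have h2 := (h1.const_mul (M * r₁)).div_const (1 - q)
    simpa using h2
  have hTU : TendstoUniformlyOn (fun n z => P n z) Wl Filter.atTop (ball z₀ r₁) := by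
    rw [Metric.tendstoUniformlyOn_iff]
    intro ε hε
    filter_upwards [hblim.eventually (gt_mem_nhds hε)] with n hn z hz
    rw [dist_comm]
    exact lt_of_le_of_lt (hdistW n z hz) hn
  have hWd : DifferentiableOn ℂ Wl (ball z₀ r₁) :=
    hTU.tendstoLocallyUniformlyOn.differentiableOn
      (Filter.Eventually.of_forall fun n => (hIter n).1) isOpen_ball
  have hWv : ∀ z ∈ ball z₀ r₁, Wl z ∈ closedBall w₀ (M * r₁) := by
    intro z hz
    exact (Metric.isClosed_closedBall (x := w₀) (ε := M * r₁)).mem_of_tendsto (htend z hz)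
      (Filter.Eventually.of_forall fun n => (hIter n).2 z hz)
  have hWvb : ∀ z ∈ ball z₀ r₁, Wl z ∈ ball w₀ b := fun z hz => hcb_b (hWv z hz)
  have hWc : ContinuousOn Wl (ball z₀ r₁) := hWd.continuousOn
  -- the integral equation for the limit
  have hIntEq : ∀ z ∈ ball z₀ r₁, Wl z = w₀ + ∫ t in (0:ℝ)..1,
      (z - z₀) * F (Wl (z₀ + (t:ℂ) * (z - z₀))) (z₀ + (t:ℂ) * (z - z₀)) := by
    intro z hz
    have h1 : Filter.Tendsto (fun n => P (n+1) z) Filter.atTop (nhds (Wl z)) :=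
      (htend z hz).comp (Filter.tendsto_add_atTop_nat 1)
    refine tendsto_nhds_unique h1 ?_
    rw [tendsto_iff_dist_tendsto_zero]
    apply squeeze_zero (fun n => dist_nonneg)
      (g := fun n : ℕ => r₁ * (K * ((M * r₁) * q ^ n / (1 - q))))
    · intro n
      have hexp : P (n+1) z = w₀ + ∫ t in (0:ℝ)..1,
          (z - z₀) * F (P n (z₀ + (t:ℂ) * (z - z₀))) (z₀ + (t:ℂ) * (z - z₀)) := rfl
      rw [hexp, dist_add_left, dist_eq_norm,
        ← intervalIntegral.integral_sub
          (hIint r₁ hr₁a.le (P n) (hPcont n) (hPval n) z hz)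
          (hIint r₁ hr₁a.le Wl hWc hWvb z hz)]
      have hbd : ∀ t ∈ Ι (0:ℝ) 1,
          ‖(z - z₀) * F (P n (z₀ + (t:ℂ) * (z - z₀))) (z₀ + (t:ℂ) * (z - z₀)) -
            (z - z₀) * F (Wl (z₀ + (t:ℂ) * (z - z₀))) (z₀ + (t:ℂ) * (z - z₀))‖ ≤
          r₁ * (K * ((M * r₁) * q ^ n / (1 - q))) := by
        intro t ht
        have ht' := hIsub ht
        have hseg := seg_mem hz ht'
        rw [← mul_sub, norm_mul]
        have h1' : ‖z - z₀‖ ≤ r₁ := by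
          rw [← dist_eq_norm]; exact (mem_ball.1 hz).le
        have h2 := hLip _ (hball_a hseg) _ (hPval n _ hseg) _ (hWvb _ hseg)
        have h3 : ‖P n (z₀ + (t:ℂ) * (z - z₀)) - Wl (z₀ + (t:ℂ) * (z - z₀))‖ ≤
            (M * r₁) * q ^ n / (1 - q) := by
          rw [← dist_eq_norm]; exact hdistW n _ hseg
        apply mul_le_mul h1' _ (norm_nonneg _) hr₁0.le
        exact h2.trans (mul_le_mul_of_nonneg_left h3 hK.le)
      calc ‖∫ t in (0:ℝ)..1, ((z - z₀) * F (P n (z₀ + (t:ℂ) * (z - z₀)))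
            (z₀ + (t:ℂ) * (z - z₀)) - (z - z₀) * F (Wl (z₀ + (t:ℂ) * (z - z₀)))
            (z₀ + (t:ℂ) * (z - z₀)))‖ ≤ r₁ * (K * ((M * r₁) * q ^ n / (1 - q))) * |1 - 0| :=
            norm_integral_le_of_norm_le_const hbd
        _ = r₁ * (K * ((M * r₁) * q ^ n / (1 - q))) := by norm_num
    · have h2 := (hblim.const_mul K).const_mul r₁
      simpa [mul_assoc] using h2
  -- derivative of the limit
  have hWderiv : ∀ z ∈ ball z₀ r₁, HasDerivAt Wl (F (Wl z) z) z := by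
    intro z hz
    have hgd := hgD Wl hWd hWvb
    have hP := (hasDerivAt_primitive hgd hz).const_add w₀
    apply hP.congr_of_eventuallyEq
    exact Filter.eventuallyEq_of_mem (isOpen_ball.mem_nhds hz) (fun x hx => hIntEq x hx)
  have hW0 : Wl z₀ = w₀ := by
    have h1 := hIntEq z₀ (mem_ball_self hr₁0)
    simpa using h1
  refine ⟨Wl, ⟨hWd.mono hball_r, fun z hz => hWvb z (hball_r hz), hW0,
    fun z hz => hWderiv z (hball_r hz)⟩, ?_⟩
  -- uniqueness
  rintro W' ⟨hW'd, hW'v, hW'0, hW'deriv⟩ z hz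
  have hW'c : ContinuousOn W' (ball z₀ r) := hW'd.continuousOn
  have hgC' : ContinuousOn (fun ζ => F (W' ζ) ζ) (ball z₀ r) :=
    hgC r hr_a.le W' hW'c hW'v
  have hgCW : ContinuousOn (fun ζ => F (Wl ζ) ζ) (ball z₀ r) :=
    hgC r hr_a.le Wl (hWc.mono hball_r) (fun x hx => hWvb x (hball_r hx))
  have hIntU : ∀ ζ ∈ ball z₀ r, W' ζ = w₀ + ∫ t in (0:ℝ)..1,
      (ζ - z₀) * F (W' (z₀ + (t:ℂ) * (ζ - z₀))) (z₀ + (t:ℂ) * (ζ - z₀)) := by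
    intro ζ hζ
    have h1 := ftc_segment (f := fun x => F (W' x) x) hW'deriv hgC' hζ
    rw [hW'0] at h1
    exact h1
  have hIntW : ∀ ζ ∈ ball z₀ r, Wl ζ = w₀ + ∫ t in (0:ℝ)..1,
      (ζ - z₀) * F (Wl (z₀ + (t:ℂ) * (ζ - z₀))) (z₀ + (t:ℂ) * (ζ - z₀)) := by
    intro ζ hζ
    have h1 := ftc_segment (f := fun x => F (Wl x) x)
      (fun x hx => hWderiv x (hball_r hx)) hgCW hζ
    rw [← hW0]
    exact h1
  set ρ : ℝ := dist z z₀ with hρdef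
  have hρr : ρ < r := mem_ball.1 hz
  have hρ0 : 0 ≤ ρ := dist_nonneg
  have hsubρ : closedBall z₀ ρ ⊆ ball z₀ r := closedBall_subset_ball hρr
  set φ : ℂ → ℝ := fun ζ => ‖W' ζ - Wl ζ‖ with hφdef
  have hφc : ContinuousOn φ (closedBall z₀ ρ) :=
    ((hW'c.mono hsubρ).sub ((hWc.mono hball_r).mono hsubρ)).norm
  obtain ⟨ζm, hζm, hmax⟩ := (isCompact_closedBall z₀ ρ).exists_isMaxOn
    ⟨z₀, mem_closedBall_self hρ0⟩ hφc
  have hKρ : K * ρ < 1 := by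
    have : K * ρ ≤ K * r := mul_le_mul_of_nonneg_left hρr.le hK.le
    linarith
  have key : ∀ ζ ∈ closedBall z₀ ρ, φ ζ ≤ (K * ρ) * φ ζm := by
    intro ζ hζ
    have hζr : ζ ∈ ball z₀ r := hsubρ hζ
    have hφeq : φ ζ = ‖(w₀ + ∫ t in (0:ℝ)..1,
        (ζ - z₀) * F (W' (z₀ + (t:ℂ) * (ζ - z₀))) (z₀ + (t:ℂ) * (ζ - z₀))) -
        (w₀ + ∫ t in (0:ℝ)..1,
        (ζ - z₀) * F (Wl (z₀ + (t:ℂ) * (ζ - z₀))) (z₀ + (t:ℂ) * (ζ - z₀)))‖ := by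
      rw [hφdef]
      rw [← hIntU ζ hζr, ← hIntW ζ hζr]
    rw [hφeq, add_sub_add_left_eq_sub,
      ← intervalIntegral.integral_sub
        (hIint r hr_a.le W' hW'c hW'v ζ hζr)
        (hIint r hr_a.le Wl (hWc.mono hball_r) (fun x hx => hWvb x (hball_r hx)) ζ hζr)]
    have hbd : ∀ t ∈ Ι (0:ℝ) 1,
        ‖(ζ - z₀) * F (W' (z₀ + (t:ℂ) * (ζ - z₀))) (z₀ + (t:ℂ) * (ζ - z₀)) -
          (ζ - z₀) * F (Wl (z₀ + (t:ℂ) * (ζ - z₀))) (z₀ + (t:ℂ) * (ζ - z₀))‖ ≤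
        ρ * (K * φ ζm) := by
      intro t ht
      have ht' := hIsub ht
      have hsegc : z₀ + (t:ℂ) * (ζ - z₀) ∈ closedBall z₀ ρ := seg_mem_closed hζ ht'
      have hsegr : z₀ + (t:ℂ) * (ζ - z₀) ∈ ball z₀ r := hsubρ hsegc
      rw [← mul_sub, norm_mul]
      have h1 : ‖ζ - z₀‖ ≤ ρ := by
        rw [← dist_eq_norm]; exact mem_closedBall.1 hζ
      have h2 := hLip _ (ball_subset_ball hr_a.le hsegr) _
        (hW'v _ hsegr) _ (hWvb _ (hball_r hsegr))
      have h3 : φ (z₀ + (t:ℂ) * (ζ - z₀)) ≤ φ ζm := hmax hsegc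
      apply mul_le_mul h1 _ (norm_nonneg _) hρ0
      exact h2.trans (mul_le_mul_of_nonneg_left h3 hK.le)
    calc ‖∫ t in (0:ℝ)..1, ((ζ - z₀) * F (W' (z₀ + (t:ℂ) * (ζ - z₀)))
          (z₀ + (t:ℂ) * (ζ - z₀)) - (ζ - z₀) * F (Wl (z₀ + (t:ℂ) * (ζ - z₀)))
          (z₀ + (t:ℂ) * (ζ - z₀)))‖ ≤ ρ * (K * φ ζm) * |1 - 0| :=
          norm_integral_le_of_norm_le_const hbd
      _ = (K * ρ) * φ ζm := by norm_num; ring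
  have hφm0 : φ ζm ≤ 0 := by
    have h1 := key ζm hζm
    nlinarith [norm_nonneg (W' ζm - Wl ζm)]
  have hz2 : z ∈ closedBall z₀ ρ := mem_closedBall.2 le_rfl
  have h2 := key z hz2
  have h3 : φ z ≤ 0 := by nlinarith [norm_nonneg (W' ζm - Wl ζm)]
  have h4 : ‖W' z - Wl z‖ = 0 := le_antisymm h3 (norm_nonneg _)
  rw [norm_eq_zero, sub_eq_zero] at h4
  exact h4
end

section
/- Let W : V → ℂ be holomorphic on an open set V ⊂ ℂ solving W'(z) = F(W(z), z), where F is holomorphic on a neighbourhood of the graph of W. Let z∞ ∈ ∂V and suppose there is a sequence z_n ∈ V with z_n → z∞ such that W(z_n) → W∞ ∈ ℂ and F is holomorphic at (W∞, z∞). Then W admits an analytic continuation to a neighbourhood of z∞: there exists ρ > 0 and a holomorphic S on D(z∞, ρ) solving S' = F(S(z), z) with S = W on a nonempty open subset of V ∩ D(z∞, ρ). -/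
open Metric Set Filter Topology
open scoped NNReal ENNReal

/-- A holomorphic function on a disc has a primitive on any strictly smaller concentric disc. -/
lemma exists_primitive_aux {g : ℂ → ℂ} {c : ℂ} {ρ₁ r : ℝ}
    (hg : DifferentiableOn ℂ g (Metric.ball c ρ₁)) (hr : 0 < r) (hrρ : r < ρ₁) :
    ∃ G : ℂ → ℂ, G c = 0 ∧ ∀ z ∈ Metric.ball c r, HasDerivAt G (g z) z := by
  set R : ℝ≥0 := ((r + ρ₁) / 2).toNNReal with hRdef
  have hcoe : (R : ℝ) = (r + ρ₁) / 2 := Real.coe_toNNReal _ (by linarith)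
  have hRr : r < (R : ℝ) := by rw [hcoe]; linarith
  have hRρ : (R : ℝ) < ρ₁ := by rw [hcoe]; linarith
  have hR0 : 0 < R := by
    rw [← NNReal.coe_lt_coe]; exact lt_trans hr hRr
  have hd : DifferentiableOn ℂ g (closedBall c (R : ℝ)) :=
    hg.mono (closedBall_subset_ball hRρ)
  have h : HasFPowerSeriesOnBall g (cauchyPowerSeries g c R) c R :=
    hd.hasFPowerSeriesOnBall hR0
  set p := cauchyPowerSeries g c R with hp
  set a : ℕ → ℂ := fun n => p.coeff n with ha
  refine ⟨fun z => ∑' n, a n / (n + 1) * (z - c) ^ (n + 1), by simp, ?_⟩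
  intro z hz
  have key : ∀ y : ℂ, ‖y‖ < (R : ℝ) →
      Summable (fun n => a n / (n + 1) * y ^ (n + 1)) := by
    intro y hy
    have hmem : y ∈ Metric.eball (0 : ℂ) R := by
      rw [Metric.eball_coe, mem_ball_zero_iff]
      exact_mod_cast hy
    have hs1 : Summable (fun n => p n fun _ => y) := (h.hasSum hmem).summable
    have hs2 : Summable (fun n => ‖p n fun _ => y‖) := summable_norm_iff.mpr hs1
    refine Summable.of_norm_bounded (g := fun n => ‖y‖ * ‖p n fun _ => y‖) (hs2.mul_left _) ?_
    intro n
    simp only [FormalMultilinearSeries.apply_eq_pow_smul_coeff, smul_eq_mul]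
    have h1 : ‖a n / (n + 1) * y ^ (n + 1)‖ ≤ ‖a n‖ * ‖y‖ ^ (n + 1) := by
      rw [norm_mul, norm_pow, norm_div]
      have : (1 : ℝ) ≤ ‖(n + 1 : ℂ)‖ := by
        rw [show ((n : ℂ) + 1) = ((n + 1 : ℕ) : ℂ) by push_cast; ring, Complex.norm_natCast]
        exact_mod_cast Nat.one_le_iff_ne_zero.mpr (Nat.succ_ne_zero n)
      gcongr
      exact div_le_self (norm_nonneg _) this
    refine h1.trans (le_of_eq ?_)
    rw [norm_mul, norm_pow]
    ring
  apply hasDerivAt_of_tendstoUniformlyOn (l := atTop) (f := fun N z => ∑ k ∈ Finset.range N,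
      a k / (k + 1) * (z - c) ^ (k + 1))
      (f' := fun N z => ∑ k ∈ Finset.range N, a k * (z - c) ^ k)
      isOpen_ball ?_ ?_ ?_ hz
  · have := h.tendstoUniformlyOn' (r' := r.toNNReal)
      (by rw [ENNReal.coe_lt_coe, ← NNReal.coe_lt_coe, Real.coe_toNNReal _ hr.le]; exact hRr)
    rw [Real.coe_toNNReal _ hr.le] at this
    apply this.congr
    filter_upwards with N z
    intro hz
    simp only [FormalMultilinearSeries.partialSum]
    refine Finset.sum_congr rfl fun k _ => ?_
    rw [FormalMultilinearSeries.apply_eq_pow_smul_coeff, smul_eq_mul]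
    ring
  · filter_upwards with N x hx
    apply HasDerivAt.fun_sum
    intro k _
    have h1 : HasDerivAt (fun z : ℂ => (z - c) ^ (k + 1))
        ((k + 1 : ℕ) * (x - c) ^ k * 1) x := by
      simpa using (((hasDerivAt_id x).sub_const c).fun_pow (k + 1))
    have h2 := h1.const_mul (a k / (k + 1))
    convert h2 using 1
    · rfl
    have hk : ((k : ℂ) + 1) ≠ 0 := Nat.cast_add_one_ne_zero k
    push_cast
    field_simp
  · intro x hx
    have hx' : ‖x - c‖ < (R : ℝ) := by
      rw [← dist_eq_norm]
      exact lt_trans (mem_ball.mp hx) hRr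
    exact ((key _ hx').hasSum).tendsto_sum_nat

set_option maxHeartbeats 2000000 in
/-- Single-sequence continuation criterion for holomorphic ODEs (Theorem 1). -/
theorem stmt3 (V : Set ℂ) (hV : IsOpen V) (W : ℂ → ℂ)
    (hW : DifferentiableOn ℂ W V)
    (U : Set (ℂ × ℂ)) (hU : IsOpen U)
    (hgraph : ∀ z ∈ V, (W z, z) ∈ U)
    (F : ℂ → ℂ → ℂ)
    (hF : DifferentiableOn ℂ (fun p : ℂ × ℂ => F p.1 p.2) U)
    (hODE : ∀ z ∈ V, HasDerivAt W (F (W z) z) z)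
    (zinf : ℂ) (hzinf : zinf ∈ frontier V)
    (Winf : ℂ) (hWinf : (Winf, zinf) ∈ U)
    (zseq : ℕ → ℂ) (hzseqV : ∀ n, zseq n ∈ V)
    (hzseq : Tendsto zseq atTop (𝓝 zinf))
    (hWseq : Tendsto (fun n => W (zseq n)) atTop (𝓝 Winf)) :
    ∃ ρ > 0, ∃ S : ℂ → ℂ,
      DifferentiableOn ℂ S (Metric.ball zinf ρ) ∧
      (∀ z ∈ Metric.ball zinf ρ, HasDerivAt S (F (S z) z) z) ∧
      ∃ O : Set ℂ, IsOpen O ∧ O.Nonempty ∧ O ⊆ V ∩ Metric.ball zinf ρ ∧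
        Set.EqOn S W O := by
  -- ### Step 1: a product neighbourhood of `(Winf, zinf)` inside `U`
  obtain ⟨ε, hε, hεU⟩ : ∃ ε > 0, ∀ w z : ℂ,
      w ∈ closedBall Winf ε → z ∈ closedBall zinf ε → (w, z) ∈ U := by
    obtain ⟨δ, hδ, hball⟩ := Metric.isOpen_iff.mp hU _ hWinf
    refine ⟨δ / 2, by positivity, fun w z hw hz => hball ?_⟩
    rw [mem_ball, Prod.dist_eq]
    exact lt_of_le_of_lt (max_le (mem_closedBall.mp hw) (mem_closedBall.mp hz)) (by linarith)
  -- ### Step 2: bound `M` for `F` on the product neighbourhood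
  obtain ⟨M0, hM0⟩ := ((isCompact_closedBall Winf ε).prod
      (isCompact_closedBall zinf ε)).exists_bound_of_continuousOn
      (hF.continuousOn.mono (fun p hp => hεU p.1 p.2 hp.1 hp.2))
  set M : ℝ := max M0 1 with hMdef
  have hM1 : (1 : ℝ) ≤ M := le_max_right _ _
  have hMpos : 0 < M := lt_of_lt_of_le one_pos hM1
  have hM : ∀ w z : ℂ, w ∈ closedBall Winf ε → z ∈ closedBall zinf ε → ‖F w z‖ ≤ M :=
    fun w z hw hz => le_trans (hM0 (w, z) ⟨hw, hz⟩) (le_max_left _ _)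
  -- differentiability of slices
  have hFat : ∀ w z : ℂ, w ∈ closedBall Winf ε → z ∈ closedBall zinf ε →
      DifferentiableAt ℂ (fun p : ℂ × ℂ => F p.1 p.2) (w, z) :=
    fun w z hw hz => hF.differentiableAt (hU.mem_nhds (hεU w z hw hz))
  have hsliceW : ∀ z ∈ closedBall zinf ε, ∀ w ∈ closedBall Winf ε,
      DifferentiableAt ℂ (fun w' => F w' z) w := by
    intro z hz w hw
    exact (hFat w z hw hz).comp (𝕜 := ℂ) w (differentiableAt_id.prodMk (differentiableAt_const z))
  -- ### Step 3: Lipschitz estimate in the first variable via Cauchy's estimate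
  set L : ℝ := 2 * M / ε with hLdef
  have hL0 : 0 < L := by positivity
  have hLip : ∀ z ∈ closedBall zinf ε, ∀ w₁ ∈ closedBall Winf (ε/2),
      ∀ w₂ ∈ closedBall Winf (ε/2), ‖F w₁ z - F w₂ z‖ ≤ L * ‖w₁ - w₂‖ := by
    intro z hz w₁ hw₁ w₂ hw₂
    have hsub : closedBall Winf (ε/2) ⊆ closedBall Winf ε :=
      closedBall_subset_closedBall (by linarith)
    have hderiv : ∀ w ∈ closedBall Winf (ε/2),
        HasDerivWithinAt (fun w' => F w' z) (deriv (fun w' => F w' z) w)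
          (closedBall Winf (ε/2)) w :=
      fun w hw => ((hsliceW z hz w (hsub hw)).hasDerivAt).hasDerivWithinAt
    have hbound : ∀ w ∈ closedBall Winf (ε/2), ‖deriv (fun w' => F w' z) w‖ ≤ L := by
      intro w hw
      have hwsub : closedBall w (ε/2) ⊆ closedBall Winf ε := by
        intro ζ hζ
        rw [mem_closedBall] at *
        calc dist ζ Winf ≤ dist ζ w + dist w Winf := dist_triangle _ _ _
          _ ≤ ε/2 + ε/2 := add_le_add hζ hw
          _ = ε := by ring
      have hsphere : ∀ ζ ∈ sphere w (ε/2), ‖F ζ z‖ ≤ M := by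
        intro ζ hζ
        exact hM ζ z (hwsub (sphere_subset_closedBall hζ)) hz
      have hdc : DiffContOnCl ℂ (fun w' => F w' z) (ball w (ε/2)) := by
        constructor
        · intro w' hw'
          exact (hsliceW z hz w' (hwsub (ball_subset_closedBall hw'))).differentiableWithinAt
        · intro w' hw'
          have hw'' : w' ∈ closedBall Winf ε :=
            hwsub (closure_ball_subset_closedBall hw')
          exact (hsliceW z hz w' hw'').continuousAt.continuousWithinAt
      have h2 := Complex.norm_deriv_le_of_forall_mem_sphere_norm_le
        (by positivity : (0:ℝ) < ε/2) hdc hsphere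
      have h3 : M / (ε/2) = L := by rw [hLdef]; field_simp
      rwa [h3] at h2
    have := (convex_closedBall Winf (ε/2)).norm_image_sub_le_of_norm_hasDerivWithin_le
      hderiv hbound hw₂ hw₁
    exact this
  -- ### Step 4: choice of radius and starting point
  set ρ : ℝ := min (ε/3) (ε/(16*M)) with hρdef
  have hρ0 : 0 < ρ := lt_min (by positivity) (by positivity)
  have hρ1 : ρ ≤ ε/3 := min_le_left _ _
  have hρ2 : ρ ≤ ε/(16*M) := min_le_right _ _
  have hMρ : M * (2*ρ) ≤ ε/8 := by
    have : M * (2 * (ε/(16*M))) = ε/8 := by field_simp; ring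
    nlinarith
  have hLρ : L * ρ ≤ 1/2 := by
    have h1 : L * ρ ≤ L * (ε/(16*M)) := by nlinarith
    have h2 : L * (ε/(16*M)) = 1/8 := by rw [hLdef]; field_simp; ring
    linarith
  obtain ⟨n, hn1, hn2⟩ := ((Metric.tendsto_nhds.mp hzseq (ρ/2) (by positivity)).and
    (Metric.tendsto_nhds.mp hWseq (ε/8) (by positivity))).exists
  set z0 : ℂ := zseq n with hz0def
  set w0 : ℂ := W z0 with hw0def
  have hz0V : z0 ∈ V := hzseqV n
  have hdz0 : dist z0 zinf < ρ/2 := hn1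
  have hdw0 : dist w0 Winf < ε/8 := hn2
  -- the shrinking radii
  set ρk : ℕ → ℝ := fun k => ρ * (1 + 1/(k+1)) with hρkdef
  have hρk_pos : ∀ k, 0 < ρk k := fun k => by
    have : (0:ℝ) < 1 + 1/(k+1) := by positivity
    positivity
  have hρk_le : ∀ k, ρk k ≤ 2*ρ := by
    intro k
    have h1 : 1/((k:ℝ)+1) ≤ 1 := by
      rw [div_le_one (by positivity)]
      linarith [Nat.cast_nonneg (α := ℝ) k]
    have := hρ0.le
    rw [hρkdef]
    nlinarith
  have hρk_gt : ∀ k, ρ < ρk k := by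
    intro k
    have h1 : (0:ℝ) < 1/((k:ℝ)+1) := by positivity
    rw [hρkdef]
    nlinarith
  have hρk_anti : ∀ k, ρk (k+1) < ρk k := by
    intro k
    have h1 : 1/((k:ℝ)+1+1) < 1/((k:ℝ)+1) := by
      apply div_lt_div_of_pos_left one_pos (by positivity)
      linarith
    have h2 : ((k:ℝ)+1+1) = (((k+1 : ℕ) : ℝ)+1) := by push_cast; ring
    rw [hρkdef]
    dsimp only
    rw [← h2] at *
    nlinarith
  have hBallsub : ∀ k, ball z0 (ρk k) ⊆ ball zinf ε := by
    intro k z hz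
    rw [mem_ball] at *
    calc dist z zinf ≤ dist z z0 + dist z0 zinf := dist_triangle _ _ _
      _ < 2*ρ + ρ/2 := add_lt_add_of_lt_of_le (lt_of_lt_of_le hz (hρk_le k)) hdz0.le
      _ ≤ 2*(ε/3) + (ε/3)/2 := by linarith
      _ < ε := by linarith
  -- memberships for functions within ε/8 of w0
  have hKmem : ∀ (y : ℂ), ‖y - w0‖ ≤ ε/8 → y ∈ closedBall Winf (ε/2) := by
    intro y hy
    rw [mem_closedBall, dist_eq_norm]
    calc ‖y - Winf‖ ≤ ‖y - w0‖ + ‖w0 - Winf‖ := norm_sub_le_norm_sub_add_norm_sub _ _ _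
      _ ≤ ε/8 + ε/8 := add_le_add hy (by rw [← dist_eq_norm]; exact hdw0.le)
      _ ≤ ε/2 := by linarith
  have hKmem' : ∀ (y : ℂ), y ∈ closedBall Winf (ε/2) → y ∈ closedBall Winf ε :=
    fun y hy => closedBall_subset_closedBall (by linarith) hy
  have hzK : ∀ k, ∀ z ∈ ball z0 (ρk k), z ∈ closedBall zinf ε :=
    fun k z hz => ball_subset_closedBall (hBallsub k hz)
  -- ### Step 5: the Picard iteration
  have hgdiff : ∀ k (f : ℂ → ℂ), DifferentiableOn ℂ f (ball z0 (ρk k)) →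
      (∀ z ∈ ball z0 (ρk k), ‖f z - w0‖ ≤ ε/8) →
      DifferentiableOn ℂ (fun z => F (f z) z) (ball z0 (ρk k)) := by
    intro k f hfd hfb z hz
    have h1 : DifferentiableAt ℂ f z := hfd.differentiableAt (isOpen_ball.mem_nhds hz)
    have h2 : DifferentiableAt ℂ (fun p : ℂ × ℂ => F p.1 p.2) (f z, z) :=
      hFat (f z) z (hKmem' _ (hKmem _ (hfb z hz))) (hzK k z hz)
    have h3 : DifferentiableAt ℂ ((fun p : ℂ × ℂ => F p.1 p.2) ∘ (fun z => (f z, z))) z :=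
      DifferentiableAt.comp (𝕜 := ℂ) (f := fun w => (f w, w)) z h2 (h1.prodMk differentiableAt_id)
    exact h3.differentiableWithinAt
  have prim : ∀ k (f : ℂ → ℂ), ∃ G : ℂ → ℂ,
      DifferentiableOn ℂ (fun z => F (f z) z) (ball z0 (ρk k)) →
        G z0 = 0 ∧ ∀ z ∈ ball z0 (ρk (k+1)), HasDerivAt G (F (f z) z) z := by
    intro k f
    by_cases h : DifferentiableOn ℂ (fun z => F (f z) z) (ball z0 (ρk k))
    · obtain ⟨G, h1, h2⟩ := exists_primitive_aux h (hρk_pos (k+1)) (hρk_anti k)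
      exact ⟨G, fun _ => ⟨h1, h2⟩⟩
    · exact ⟨0, fun hc => absurd hc h⟩
  choose prims hprims using prim
  obtain ⟨seq, hseq0, hseq_succ⟩ : ∃ seq : ℕ → ℂ → ℂ, (∀ z, seq 0 z = w0) ∧
      (∀ k z, seq (k+1) z = w0 + prims k (seq k) z) :=
    ⟨fun k => Nat.rec (motive := fun _ => ℂ → ℂ) (fun _ => w0)
      (fun k f => fun z => w0 + prims k f z) k, fun _ => rfl, fun _ _ => rfl⟩
  -- the invariant
  have hstep : ∀ k,
      (DifferentiableOn ℂ (seq k) (ball z0 (ρk k)) ∧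
        (∀ z ∈ ball z0 (ρk k), ‖seq k z - w0‖ ≤ ε/8) ∧ seq k z0 = w0) →
      (DifferentiableOn ℂ (seq (k+1)) (ball z0 (ρk (k+1))) ∧
        (∀ z ∈ ball z0 (ρk (k+1)), ‖seq (k+1) z - w0‖ ≤ ε/8) ∧ seq (k+1) z0 = w0) ∧
      ∀ z ∈ ball z0 (ρk (k+1)), HasDerivAt (seq (k+1)) (F (seq k z) z) z := by
    rintro k ⟨hdk, hbk, hvk⟩
    have hg : DifferentiableOn ℂ (fun z => F (seq k z) z) (ball z0 (ρk k)) :=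
      hgdiff k (seq k) hdk hbk
    obtain ⟨hG0, hGd⟩ := hprims k (seq k) hg
    have hder : ∀ z ∈ ball z0 (ρk (k+1)), HasDerivAt (seq (k+1)) (F (seq k z) z) z := by
      intro z hz
      have h1 := (hGd z hz).const_add w0
      have h2 : seq (k+1) = fun z => w0 + prims k (seq k) z := funext fun z => hseq_succ k z
      rw [h2]
      exact h1
    have hz0mem : ∀ m, z0 ∈ ball z0 (ρk m) := fun m => mem_ball_self (hρk_pos m)
    have hval : seq (k+1) z0 = w0 := by rw [hseq_succ k z0, hG0, add_zero]
    have hsub1 : ball z0 (ρk (k+1)) ⊆ ball z0 (ρk k) := ball_subset_ball (hρk_anti k).le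
    have hbnd : ∀ z ∈ ball z0 (ρk (k+1)), ‖seq (k+1) z - w0‖ ≤ ε/8 := by
      intro z hz
      have hmv := (convex_ball z0 (ρk (k+1))).norm_image_sub_le_of_norm_hasDerivWithin_le
        (f := seq (k+1)) (f' := fun z => F (seq k z) z) (C := M)
        (fun x hx => (hder x hx).hasDerivWithinAt)
        (fun x hx => hM _ _ (hKmem' _ (hKmem _ (hbk x (hsub1 hx)))) (hzK k x (hsub1 hx)))
        (hz0mem (k+1)) hz
      rw [hval] at hmv
      calc ‖seq (k+1) z - w0‖ ≤ M * ‖z - z0‖ := hmv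
        _ ≤ M * (2*ρ) := by
            apply mul_le_mul_of_nonneg_left _ hMpos.le
            have := mem_ball.mp hz
            rw [dist_eq_norm] at this
            linarith [hρk_le (k+1)]
        _ ≤ ε/8 := hMρ
    exact ⟨⟨fun z hz => (hder z hz).differentiableAt.differentiableWithinAt, hbnd, hval⟩, hder⟩
  have hP : ∀ k, DifferentiableOn ℂ (seq k) (ball z0 (ρk k)) ∧
      (∀ z ∈ ball z0 (ρk k), ‖seq k z - w0‖ ≤ ε/8) ∧ seq k z0 = w0 := by
    intro k
    induction k with
    | zero =>
      refine ⟨?_, fun z _ => ?_, hseq0 z0⟩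
      · apply DifferentiableOn.congr (differentiableOn_const w0) (fun z _ => hseq0 z)
      · rw [hseq0]
        simp
        positivity
    | succ k ih => exact (hstep k ih).1
  have hD : ∀ k, ∀ z ∈ ball z0 (ρk (k+1)), HasDerivAt (seq (k+1)) (F (seq k z) z) z :=
    fun k => (hstep k (hP k)).2
  -- ### Step 6: uniform convergence
  set B : Set ℂ := ball z0 ρ with hBdef
  have hBsubk : ∀ k, B ⊆ ball z0 (ρk k) := fun k => ball_subset_ball (hρk_gt k).le
  have hseqmem : ∀ k, ∀ z ∈ B, seq k z ∈ closedBall Winf (ε/2) :=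
    fun k z hz => hKmem _ ((hP k).2.1 z (hBsubk k hz))
  have hzB : ∀ z ∈ B, z ∈ closedBall zinf ε := fun z hz => hzK 0 z (hBsubk 0 hz)
  set u : ℕ → ℝ := fun k => ε/8 * (1/2)^k with hudef
  have hQ : ∀ k, ∀ z ∈ B, ‖seq (k+1) z - seq k z‖ ≤ u k := by
    intro k
    induction k with
    | zero =>
      intro z hz
      have := (hP 1).2.1 z (hBsubk 1 hz)
      simpa [hudef, hseq0] using this
    | succ k ih =>
      intro z hz
      have hz0B : z0 ∈ B := mem_ball_self hρ0
      have hder2 : ∀ x ∈ B, HasDerivWithinAt (fun z => seq (k+2) z - seq (k+1) z)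
          (F (seq (k+1) x) x - F (seq k x) x) B x := by
        intro x hx
        exact ((hD (k+1) x (hBsubk (k+2) hx)).sub (hD k x (hBsubk (k+1) hx))).hasDerivWithinAt
      have hbnd2 : ∀ x ∈ B, ‖F (seq (k+1) x) x - F (seq k x) x‖ ≤ L * u k := by
        intro x hx
        calc ‖F (seq (k+1) x) x - F (seq k x) x‖
            ≤ L * ‖seq (k+1) x - seq k x‖ :=
              hLip x (hzB x hx) _ (hseqmem (k+1) x hx) _ (hseqmem k x hx)
          _ ≤ L * u k := mul_le_mul_of_nonneg_left (ih x hx) hL0.le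
      have hmv := (convex_ball z0 ρ).norm_image_sub_le_of_norm_hasDerivWithin_le
        hder2 hbnd2 hz0B hz
      have hzz : (seq (k+2) z0 - seq (k+1) z0) = 0 := by
        rw [(hP (k+2)).2.2, (hP (k+1)).2.2, sub_self]
      rw [hzz, sub_zero] at hmv
      have huk : 0 ≤ u k := by rw [hudef]; positivity
      calc ‖seq (k+2) z - seq (k+1) z‖ ≤ L * u k * ‖z - z0‖ := hmv
        _ ≤ L * u k * ρ := by
            apply mul_le_mul_of_nonneg_left _ (by positivity)
            have := mem_ball.mp hz
            rw [dist_eq_norm] at this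
            linarith
        _ = (L * ρ) * u k := by ring
        _ ≤ (1/2) * u k := mul_le_mul_of_nonneg_right hLρ huk
        _ = u (k+1) := by rw [hudef]; ring
  have hu : Summable u := by
    rw [hudef]
    exact (summable_geometric_two).mul_left (ε/8)
  set S : ℂ → ℂ := fun z => w0 + ∑' k, (seq (k+1) z - seq k z) with hSdef
  have htu := tendstoUniformlyOn_tsum_nat hu (fun k z hz => hQ k z hz)
  have hseq_eq : ∀ N z, seq N z = w0 + ∑ k ∈ Finset.range N, (seq (k+1) z - seq k z) := by
    intro N z
    rw [Finset.sum_range_sub (f := fun k => seq k z), hseq0 z]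
    ring
  have hSU : TendstoUniformlyOn (fun N z => seq N z) S atTop B := by
    rw [Metric.tendstoUniformlyOn_iff] at htu ⊢
    intro δ hδ
    filter_upwards [htu δ hδ] with N hN z hz
    have h2 := hN z hz
    rw [dist_eq_norm] at h2 ⊢
    rw [hseq_eq N z, hSdef]
    have heq : (w0 + ∑' k, (seq (k+1) z - seq k z)) -
        (w0 + ∑ k ∈ Finset.range N, (seq (k+1) z - seq k z)) =
        (∑' k, (seq (k+1) z - seq k z)) - ∑ k ∈ Finset.range N, (seq (k+1) z - seq k z) := by
      ring
    rw [heq]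
    exact h2
  have hpt : ∀ z ∈ B, Tendsto (fun N => seq N z) atTop (𝓝 (S z)) :=
    fun z hz => hSU.tendsto_at hz
  have hSbound : ∀ z ∈ B, ‖S z - w0‖ ≤ ε/8 := by
    intro z hz
    have h1 : Tendsto (fun N => ‖seq N z - w0‖) atTop (𝓝 ‖S z - w0‖) :=
      ((hpt z hz).sub_const w0).norm
    exact le_of_tendsto h1 (Eventually.of_forall fun N => (hP N).2.1 z (hBsubk N hz))
  have hSmem : ∀ z ∈ B, S z ∈ closedBall Winf (ε/2) := fun z hz => hKmem _ (hSbound z hz)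
  have hder : TendstoUniformlyOn (fun N z => F (seq N z) z) (fun z => F (S z) z) atTop B := by
    rw [Metric.tendstoUniformlyOn_iff] at hSU ⊢
    intro δ hδ
    have hδ' : 0 < δ/(L+1) := by positivity
    filter_upwards [hSU (δ/(L+1)) hδ'] with N hN z hz
    have h2 := hN z hz
    rw [dist_eq_norm] at h2 ⊢
    calc ‖F (S z) z - F (seq N z) z‖ ≤ L * ‖S z - seq N z‖ :=
          hLip z (hzB z hz) _ (hSmem z hz) _ (hseqmem N z hz)
      _ ≤ L * (δ/(L+1)) := mul_le_mul_of_nonneg_left h2.le hL0.le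
      _ < δ := by
          rw [mul_div_assoc'] at *
          rw [div_lt_iff₀ (by linarith)]
          nlinarith
  have hSder : ∀ z ∈ B, HasDerivAt S (F (S z) z) z := by
    intro z hz
    apply hasDerivAt_of_tendstoUniformlyOn (l := atTop) (f := fun N => seq (N+1))
      (f' := fun N z => F (seq N z) z) isOpen_ball hder ?_ ?_ hz
    · filter_upwards with N x hx
      exact hD N x (hBsubk (N+1) hx)
    · intro x hx
      exact (hpt x hx).comp (tendsto_add_atTop_nat 1)
  have hSz0 : S z0 = w0 := by
    rw [hSdef]
    have : (fun k => seq (k+1) z0 - seq k z0) = fun _ => 0 := by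
      funext k
      rw [(hP (k+1)).2.2, (hP k).2.2, sub_self]
    simp [this]
  -- ### Step 7: assemble the answer
  have hzsub : ball zinf (ρ/2) ⊆ B := by
    intro z hz
    rw [mem_ball] at *
    calc dist z z0 ≤ dist z zinf + dist zinf z0 := dist_triangle _ _ _
      _ < ρ/2 + ρ/2 := add_lt_add hz (by rwa [dist_comm] at hdz0)
      _ = ρ := by ring
  refine ⟨ρ/2, by positivity, S,
    fun z hz => (hSder z (hzsub hz)).differentiableAt.differentiableWithinAt,
    fun z hz => hSder z (hzsub hz), ?_⟩
  -- ### Step 8: the open set `O` and uniqueness via Grönwall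
  obtain ⟨r1, hr1, hr1V⟩ := Metric.isOpen_iff.mp hV z0 hz0V
  have hWc : ContinuousAt W z0 := hW.continuousOn.continuousAt (hV.mem_nhds hz0V)
  obtain ⟨r2, hr2, hr2W⟩ := Metric.continuousAt_iff.mp hWc (ε/8) (by positivity)
  set r : ℝ := min r1 (min r2 (ρ/2 - dist z0 zinf)) with hrdef
  have hr0 : 0 < r := lt_min hr1 (lt_min hr2 (by linarith))
  set O : Set ℂ := ball z0 r with hOdef
  have hOV : O ⊆ V := fun z hz => hr1V (ball_subset_ball (min_le_left _ _) hz)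
  have hOzinf : O ⊆ ball zinf (ρ/2) := by
    intro z hz
    rw [mem_ball] at *
    have hzr : dist z z0 < ρ/2 - dist z0 zinf :=
      lt_of_lt_of_le hz (le_trans (min_le_right _ _) (min_le_right _ _))
    calc dist z zinf ≤ dist z z0 + dist z0 zinf := dist_triangle _ _ _
      _ < ρ/2 := by linarith
  have hOB : O ⊆ B := fun z hz => hzsub (hOzinf hz)
  have hOW : ∀ z ∈ O, W z ∈ closedBall Winf (ε/2) := by
    intro z hz
    apply hKmem
    rw [← dist_eq_norm]
    exact (hr2W (lt_of_lt_of_le (mem_ball.mp hz)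
      (le_trans (min_le_right _ _) (min_le_left _ _)))).le
  refine ⟨O, isOpen_ball, ⟨z0, mem_ball_self hr0⟩, fun z hz => ⟨hOV hz, hOzinf hz⟩, ?_⟩
  -- uniqueness along segments from `z0`
  intro z hz
  obtain ⟨γ, hγ0, hγ1, hγd, hγO⟩ : ∃ γ : ℝ → ℂ, γ 0 = z0 ∧ γ 1 = z ∧
      (∀ t : ℝ, HasDerivAt γ (z - z0) t) ∧ (∀ t ∈ Icc (0:ℝ) 1, γ t ∈ O) := by
    refine ⟨fun t => z0 + t • (z - z0), by simp, by simp, fun t => ?_, fun t ht => ?_⟩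
    · have h1 : HasDerivAt (fun t : ℝ => t • (z - z0)) ((1:ℝ) • (z - z0)) t :=
        (hasDerivAt_id t).smul_const (z - z0)
      simpa using h1.const_add z0
    · rw [hOdef, mem_ball, dist_eq_norm, add_sub_cancel_left, norm_smul,
        Real.norm_eq_abs, abs_of_nonneg ht.1]
      calc t * ‖z - z0‖ ≤ 1 * ‖z - z0‖ :=
            mul_le_mul_of_nonneg_right ht.2 (norm_nonneg _)
        _ = ‖z - z0‖ := one_mul _
        _ < r := by rw [← dist_eq_norm]; exact mem_ball.mp hz
  obtain ⟨τ, hτmem, hτeq⟩ : ∃ τ : ℝ → ℝ, (∀ t, τ t ∈ Icc (0:ℝ) 1) ∧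
      (∀ t ∈ Ico (0:ℝ) 1, τ t = t) :=
    ⟨fun t => max 0 (min 1 t),
     fun t => ⟨le_max_left _ _, max_le zero_le_one (min_le_left _ _)⟩,
     fun t ht => by
      show max 0 (min 1 t) = t
      rw [min_eq_right ht.2.le, max_eq_right ht.1]⟩
  obtain ⟨v, hvdef⟩ : ∃ v : ℝ → ℂ → ℂ, ∀ t y, v t y = (z - z0) * F y (γ (τ t)) :=
    ⟨fun t y => (z - z0) * F y (γ (τ t)), fun _ _ => rfl⟩
  obtain ⟨Kc, hKc⟩ : ∃ Kc : ℝ≥0, (Kc : ℝ) = ‖z - z0‖ * L :=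
    ⟨(‖z - z0‖ * L).toNNReal, Real.coe_toNNReal _ (by positivity)⟩
  have hv : ∀ t, LipschitzOnWith Kc (v t) (closedBall Winf (ε/2)) := by
    intro t
    apply LipschitzOnWith.of_dist_le_mul
    intro y1 hy1 y2 hy2
    have hτz : γ (τ t) ∈ closedBall zinf ε := by
      have h1 := hOzinf (hγO _ (hτmem t))
      rw [mem_ball] at h1
      rw [mem_closedBall]
      linarith
    rw [dist_eq_norm, dist_eq_norm, hKc]
    have heq : v t y1 - v t y2 = (z - z0) * (F y1 (γ (τ t)) - F y2 (γ (τ t))) := by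
      rw [hvdef, hvdef]; ring
    rw [heq, norm_mul]
    calc ‖z - z0‖ * ‖F y1 (γ (τ t)) - F y2 (γ (τ t))‖
        ≤ ‖z - z0‖ * (L * ‖y1 - y2‖) :=
          mul_le_mul_of_nonneg_left (hLip (γ (τ t)) hτz y1 hy1 y2 hy2) (norm_nonneg _)
      _ = ‖z - z0‖ * L * ‖y1 - y2‖ := by ring
  have hfd : ∀ t ∈ Icc (0:ℝ) 1, HasDerivAt (S ∘ γ) ((z - z0) • F (S (γ t)) (γ t)) t := by
    intro t ht
    exact HasDerivAt.scomp (x := t) (h := γ) (hSder (γ t) (hOB (hγO t ht))) (hγd t)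
  have hgd : ∀ t ∈ Icc (0:ℝ) 1, HasDerivAt (W ∘ γ) ((z - z0) • F (W (γ t)) (γ t)) t := by
    intro t ht
    exact HasDerivAt.scomp (x := t) (h := γ) (hODE (γ t) (hOV (hγO t ht))) (hγd t)
  have key : EqOn (S ∘ γ) (W ∘ γ) (Icc (0:ℝ) 1) := by
    apply ODE_solution_unique_of_mem_Icc_right (v := v)
      (s := fun _ => closedBall Winf (ε/2)) (K := Kc) (fun t _ => hv t)
    · intro t ht
      exact (hfd t ht).continuousAt.continuousWithinAt
    · intro t ht
      have h1 := hfd t (Ico_subset_Icc_self ht)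
      have h2 : v t ((S ∘ γ) t) = (z - z0) • F (S (γ t)) (γ t) := by
        rw [hvdef, hτeq t ht, smul_eq_mul]
        rfl
      rw [h2]
      exact h1.hasDerivWithinAt
    · intro t ht
      exact hSmem (γ t) (hOB (hγO t (Ico_subset_Icc_self ht)))
    · intro t ht
      exact (hgd t ht).continuousAt.continuousWithinAt
    · intro t ht
      have h1 := hgd t (Ico_subset_Icc_self ht)
      have h2 : v t ((W ∘ γ) t) = (z - z0) • F (W (γ t)) (γ t) := by
        rw [hvdef, hτeq t ht, smul_eq_mul]
        rfl
      rw [h2]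
      exact h1.hasDerivWithinAt
    · intro t ht
      exact hOW (γ t) (hγO t (Ico_subset_Icc_self ht))
    · show S (γ 0) = W (γ 0)
      rw [hγ0, hSz0]
  have h1 := key (right_mem_Icc.mpr zero_le_one)
  simpa [hγ1] using h1
end

section
/- Let F be holomorphic on an open set U ⊂ ℂ² and suppose solutions of w' = F(w, z) through any initial point (w_n, z_n) in a fixed compact set K ⊂ U have radius of convergence at least σ > 0 (uniformly in n). If (w_n, z_n) ∈ K, (w_n, z_n) → (w∞, z∞) ∈ K, and S_n denotes the solution with S_n(z_n) = w_n, then for n large enough z∞ ∈ D(z_n, σ) and the solutions S_n converge locally uniformly near z∞ to the solution S∞ with S∞(z∞) = w∞. -/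
open Metric Set Filter Topology

private lemma seg_dist (z0 ζ : ℂ) {t : ℝ} (ht : t ∈ Icc (0:ℝ) 1) :
    dist (z0 + t • (ζ - z0)) z0 ≤ dist ζ z0 := by
  rw [dist_eq_norm, add_sub_cancel_left, norm_smul, Real.norm_eq_abs,
    abs_of_nonneg ht.1, dist_eq_norm]
  nlinarith [norm_nonneg (ζ - z0), ht.2, ht.1]

private lemma seg_der (z0 ζ : ℂ) (t : ℝ) :
    HasDerivAt (fun t : ℝ => z0 + t • (ζ - z0)) (ζ - z0) t := by
  have h1 : HasDerivAt (fun t : ℝ => t • (ζ - z0)) ((1:ℝ) • (ζ - z0)) t :=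
    (hasDerivAt_id t).smul_const _
  simpa using h1.const_add z0

private lemma apriori_bound {F : ℂ → ℂ → ℂ} {f : ℂ → ℂ} {z0 w0 : ℂ} {r ε M : ℝ}
    (hM : 0 ≤ M) (hε : 0 < ε) (hMr : M * r < ε) (hf0 : f z0 = w0)
    (hder : ∀ ζ ∈ ball z0 r, HasDerivAt f (F (f ζ) ζ) ζ)
    (hbound : ∀ x ζ, ‖x - w0‖ ≤ ε → ζ ∈ ball z0 r → ‖F x ζ‖ ≤ M) :
    ∀ ζ ∈ ball z0 r, ‖f ζ - w0‖ ≤ M * ‖ζ - z0‖ := by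
  intro ζ hζ
  have hζr : ‖ζ - z0‖ < r := by rwa [mem_ball, dist_eq_norm] at hζ
  set γ : ℝ → ℂ := fun t => z0 + t • (ζ - z0) with hγ
  have hγmem : ∀ t ∈ Icc (0:ℝ) 1, γ t ∈ ball z0 r := fun t ht =>
    mem_ball.2 (lt_of_le_of_lt (seg_dist z0 ζ ht) hζ)
  set h : ℝ → ℂ := fun t => f (γ t) with hh
  have hhder : ∀ t ∈ Icc (0:ℝ) 1,
      HasDerivAt h ((ζ - z0) • F (h t) (γ t)) t := by
    intro t ht
    have := HasDerivAt.scomp (h := γ) (x := t) (hder _ (hγmem t ht)) (seg_der z0 ζ t)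
    exact this
  have hh0 : h 0 = w0 := by simp [hh, hγ, hf0]
  have hcont : ContinuousOn h (Icc (0:ℝ) 1) := fun t ht =>
    ((hhder t ht).continuousAt).continuousWithinAt
  -- the norm bound on derivative, provided values stay in the ε-ball
  have hdbound : ∀ t ∈ Icc (0:ℝ) 1, ‖h t - w0‖ ≤ ε →
      ‖(ζ - z0) • F (h t) (γ t)‖ ≤ M * ‖ζ - z0‖ := by
    intro t ht hle
    rw [norm_smul]
    have hF := hbound (h t) (γ t) hle (hγmem t ht)
    calc ‖ζ - z0‖ * ‖F (h t) (γ t)‖ ≤ ‖ζ - z0‖ * M :=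
          mul_le_mul_of_nonneg_left hF (norm_nonneg _)
      _ = M * ‖ζ - z0‖ := mul_comm _ _
  -- values stay in the ε-ball
  have hεbd : ∀ t ∈ Icc (0:ℝ) 1, ‖h t - w0‖ ≤ ε := by
    by_contra hcon
    push_neg at hcon
    obtain ⟨t0, ht0, ht0ε⟩ := hcon
    set B := {t ∈ Icc (0:ℝ) 1 | ε ≤ ‖h t - w0‖} with hB
    have hBne : B.Nonempty := ⟨t0, ht0, ht0ε.le⟩
    have hBclosed : IsClosed B := by
      have hBeq : B = Icc (0:ℝ) 1 ∩ (fun t => ‖h t - w0‖) ⁻¹' Ici ε := by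
        ext t; simp [hB, Set.mem_sep_iff]
      rw [hBeq]
      exact ContinuousOn.preimage_isClosed_of_isClosed
        ((hcont.sub continuousOn_const).norm) isClosed_Icc isClosed_Ici
    have hBbdd : BddBelow B := ⟨0, fun t ht => ht.1.1⟩
    set t1 := sInf B with ht1
    have ht1B : t1 ∈ B := hBclosed.csInf_mem hBne hBbdd
    have ht1Icc : t1 ∈ Icc (0:ℝ) 1 := ht1B.1
    have ht1ε : ε ≤ ‖h t1 - w0‖ := ht1B.2
    have hlt : ∀ t ∈ Icc (0:ℝ) 1, t < t1 → ‖h t - w0‖ < ε := by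
      intro t ht htlt
      by_contra hc
      push_neg at hc
      exact absurd (csInf_le hBbdd ⟨ht, hc⟩) (not_le.2 htlt)
    have ht1pos : 0 < t1 := by
      rcases lt_or_eq_of_le ht1Icc.1 with hpos | hzero
      · exact hpos
      · exfalso
        rw [← hzero, hh0] at ht1ε
        simp at ht1ε
        linarith
    -- on [0, t1) the MVT gives a good bound
    have hstep : ∀ t ∈ Ico (0:ℝ) t1, ‖h t - w0‖ ≤ M * ‖ζ - z0‖ := by
      intro t ht
      have hsub : Icc (0:ℝ) t ⊆ Icc 0 1 :=
        Icc_subset_Icc le_rfl (ht.2.le.trans ht1Icc.2)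
      have hmvt := Convex.norm_image_sub_le_of_norm_hasDerivWithin_le
        (f := h) (f' := fun s => (ζ - z0) • F (h s) (γ s)) (C := M * ‖ζ - z0‖)
        (s := Icc (0:ℝ) t) (x := (0:ℝ)) (y := t)
        (fun s hs => (hhder s (hsub hs)).hasDerivWithinAt)
        (fun s hs => hdbound s (hsub hs)
          ((hlt s (hsub hs) (lt_of_le_of_lt hs.2 ht.2)).le))
        (convex_Icc 0 t) (left_mem_Icc.2 ht.1) (right_mem_Icc.2 ht.1)
      rw [hh0] at hmvt
      calc ‖h t - w0‖ ≤ M * ‖ζ - z0‖ * ‖t - 0‖ := hmvt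
        _ ≤ M * ‖ζ - z0‖ * 1 := by
            apply mul_le_mul_of_nonneg_left _ (by positivity)
            rw [Real.norm_eq_abs, sub_zero, abs_of_nonneg ht.1]
            exact (ht.2.le.trans ht1Icc.2)
        _ = M * ‖ζ - z0‖ := mul_one _
    -- continuity from the left extends the bound to t1
    have hlim : ‖h t1 - w0‖ ≤ M * ‖ζ - z0‖ := by
      have hne : (𝓝[Ico (0:ℝ) t1] t1).NeBot := by
        rw [← mem_closure_iff_nhdsWithin_neBot, closure_Ico ht1pos.ne]
        exact right_mem_Icc.2 ht1pos.le
      have hcw : ContinuousWithinAt (fun t => ‖h t - w0‖) (Ico (0:ℝ) t1) t1 :=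
        (((hcont.sub continuousOn_const).norm) t1 ht1Icc).mono
          (fun s hs => ⟨hs.1, hs.2.le.trans ht1Icc.2⟩)
      exact le_of_tendsto hcw (eventually_nhdsWithin_of_forall hstep)
    have : M * ‖ζ - z0‖ < ε :=
      lt_of_le_of_lt (mul_le_mul_of_nonneg_left hζr.le hM) hMr
    linarith
  -- final MVT on [0,1]
  have hmvt := Convex.norm_image_sub_le_of_norm_hasDerivWithin_le
    (f := h) (f' := fun s => (ζ - z0) • F (h s) (γ s)) (C := M * ‖ζ - z0‖)
    (s := Icc (0:ℝ) 1) (x := (0:ℝ)) (y := (1:ℝ))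
    (fun s hs => (hhder s hs).hasDerivWithinAt)
    (fun s hs => hdbound s hs (hεbd s hs))
    (convex_Icc 0 1) (left_mem_Icc.2 zero_le_one) (right_mem_Icc.2 zero_le_one)
  rw [hh0] at hmvt
  have hγ1 : γ 1 = ζ := by simp [hγ]
  have h1 : h 1 = f ζ := by rw [hh]; simp [hγ1]
  rw [h1] at hmvt
  simpa using hmvt

/-- Convergence of local solutions with uniform radius of convergence. -/
theorem stmt5 (U : Set (ℂ × ℂ)) (hU : IsOpen U)
    (F : ℂ → ℂ → ℂ)
    (hF : DifferentiableOn ℂ (fun p : ℂ × ℂ => F p.1 p.2) U)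
    (K : Set (ℂ × ℂ)) (hK : IsCompact K) (hKU : K ⊆ U)
    (σ : ℝ) (hσ : 0 < σ)
    (w z : ℕ → ℂ) (hmem : ∀ n, (w n, z n) ∈ K)
    (winf zinf : ℂ) (hinf : (winf, zinf) ∈ K)
    (hconv : Tendsto (fun n => (w n, z n)) atTop (𝓝 (winf, zinf)))
    (S : ℕ → ℂ → ℂ) (Sinf : ℂ → ℂ)
    (hS : ∀ n, DifferentiableOn ℂ (S n) (Metric.ball (z n) σ) ∧
      S n (z n) = w n ∧ ∀ ζ ∈ Metric.ball (z n) σ, HasDerivAt (S n) (F (S n ζ) ζ) ζ)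
    (hSinf : DifferentiableOn ℂ Sinf (Metric.ball zinf σ) ∧
      Sinf zinf = winf ∧ ∀ ζ ∈ Metric.ball zinf σ, HasDerivAt Sinf (F (Sinf ζ) ζ) ζ)
    -- local uniqueness of holomorphic solutions (follows from holomorphy of F)
    (huniq : ∀ (g h : ℂ → ℂ) (s : Set ℂ), IsOpen s → IsPreconnected s →
      (∀ ζ ∈ s, HasDerivAt g (F (g ζ) ζ) ζ) → (∀ ζ ∈ s, HasDerivAt h (F (h ζ) ζ) ζ) →
      (∃ ζ ∈ s, g ζ = h ζ) → Set.EqOn g h s) :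
    (∀ᶠ n in atTop, zinf ∈ Metric.ball (z n) σ) ∧
    ∃ ρ > 0, TendstoLocallyUniformlyOn (fun n => S n) Sinf atTop (Metric.ball zinf ρ) := by
  -- limits of the coordinate sequences
  have hzlim : Tendsto z atTop (𝓝 zinf) := (continuous_snd.tendsto _).comp hconv
  have hwlim : Tendsto w atTop (𝓝 winf) := (continuous_fst.tendsto _).comp hconv
  have h1 : ∀ᶠ n in atTop, zinf ∈ Metric.ball (z n) σ := by
    filter_upwards [hzlim (Metric.ball_mem_nhds zinf hσ)] with n hn
    have hn' : dist (z n) zinf < σ := mem_ball.1 hn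
    exact mem_ball.2 (by rw [dist_comm]; exact hn')
  -- choose ε with the closed 3ε-neighborhood of (winf, zinf) inside U
  obtain ⟨ε0, hε0pos, hε0U⟩ : ∃ ε0 > 0, ball ((winf, zinf) : ℂ × ℂ) ε0 ⊆ U :=
    Metric.isOpen_iff.mp hU _ (hKU hinf)
  set ε : ℝ := ε0 / 4 with hεdef
  have hεpos : 0 < ε := by positivity
  have hCU : ∀ p : ℂ × ℂ, dist p (winf, zinf) ≤ 3 * ε → p ∈ U := fun p hp =>
    hε0U (mem_ball.2 (lt_of_le_of_lt hp (by rw [hεdef]; linarith)))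
  -- bound M for ‖F‖ on the closed 3ε-neighborhood
  obtain ⟨M0, hM0⟩ := (isCompact_closedBall ((winf, zinf) : ℂ × ℂ) (3 * ε)).exists_bound_of_continuousOn
    (hF.continuousOn.mono (fun p hp => hCU p (mem_closedBall.1 hp)))
  set M : ℝ := max M0 1 with hMdef
  have hM1 : (1 : ℝ) ≤ M := le_max_right _ _
  have hMpos : 0 < M := lt_of_lt_of_le one_pos hM1
  have hMC : ∀ x ζ : ℂ, dist x winf ≤ 3 * ε → dist ζ zinf ≤ 3 * ε → ‖F x ζ‖ ≤ M := by
    intro x ζ hx hζ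
    have hmem' : ((x, ζ) : ℂ × ℂ) ∈ closedBall ((winf, zinf) : ℂ × ℂ) (3 * ε) := by
      rw [mem_closedBall, Prod.dist_eq]
      exact max_le hx hζ
    exact le_trans (hM0 (x, ζ) hmem') (le_max_left _ _)
  -- Lipschitz constant in the first variable, via the Cauchy estimate
  set L : ℝ := M / (ε / 2) with hLdef
  have hLpos : 0 < L := by rw [hLdef]; positivity
  have hLip : ∀ ζ : ℂ, dist ζ zinf ≤ 2 * ε → ∀ x ∈ closedBall winf (2 * ε),
      ∀ y ∈ closedBall winf (2 * ε), ‖F x ζ - F y ζ‖ ≤ L * ‖x - y‖ := by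
    intro ζ hζ
    set g : ℂ → ℂ := fun x => F x ζ with hg
    have hgd : DifferentiableOn ℂ g (ball winf (3 * ε)) := by
      intro x hx
      have hxU : ((x, ζ) : ℂ × ℂ) ∈ U := by
        apply hCU
        rw [Prod.dist_eq]
        exact max_le (le_of_lt (mem_ball.1 hx)) (by linarith)
      have hdiff : DifferentiableAt ℂ (fun p : ℂ × ℂ => F p.1 p.2) (x, ζ) :=
        hF.differentiableAt (hU.mem_nhds hxU)
      exact (hdiff.comp x (show DifferentiableAt ℂ (fun y : ℂ => (y, ζ)) x from DifferentiableAt.prodMk differentiableAt_id (differentiableAt_const ζ))).differentiableWithinAt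
    have hderiv : ∀ u ∈ closedBall winf (2 * ε), ‖deriv g u‖ ≤ L := by
      intro u hu
      have huV : u ∈ ball winf (3 * ε) := by
        rw [mem_ball]
        exact lt_of_le_of_lt (mem_closedBall.1 hu) (by linarith)
      have hsub : closedBall u (ε / 2) ⊆ ball winf (3 * ε) := by
        intro p hp
        rw [mem_ball]
        calc dist p winf ≤ dist p u + dist u winf := dist_triangle _ _ _
          _ ≤ ε / 2 + 2 * ε := add_le_add (mem_closedBall.1 hp) (mem_closedBall.1 hu)
          _ < 3 * ε := by linarith
      rw [← Complex.cderiv_eq_deriv isOpen_ball hgd (by positivity) hsub]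
      rw [hLdef]
      apply Complex.norm_cderiv_le (by positivity)
      intro p hp
      have hpu : dist p u = ε / 2 := mem_sphere.1 hp
      apply hMC
      · calc dist p winf ≤ dist p u + dist u winf := dist_triangle _ _ _
          _ ≤ ε / 2 + 2 * ε := by rw [hpu]; exact add_le_add le_rfl (mem_closedBall.1 hu)
          _ ≤ 3 * ε := by linarith
      · linarith
    intro x hx y hy
    have := Convex.norm_image_sub_le_of_norm_hasDerivWithin_le
      (f := g) (f' := fun u => deriv g u) (C := L) (s := closedBall winf (2 * ε))
      (fun u hu => ((hgd.differentiableAt (isOpen_ball.mem_nhds (by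
        rw [mem_ball]; exact lt_of_le_of_lt (mem_closedBall.1 hu) (by linarith)))).hasDerivAt).hasDerivWithinAt)
      hderiv (convex_closedBall _ _) hy hx
    exact this
  -- choice of the radius ρ
  set ρ : ℝ := min (σ / 4) (ε / (3 * M)) with hρdef
  have hρpos : 0 < ρ := lt_min (by linarith) (by positivity)
  have hρσ : ρ ≤ σ / 4 := min_le_left _ _
  have hρε : ρ ≤ ε / (3 * M) := min_le_right _ _
  have hρε3 : 3 * ρ ≤ ε := by
    have h1' : 3 * (ε / (3 * M)) = ε / M := by field_simp
    have h2' : ε / M ≤ ε := div_le_self hεpos.le hM1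
    nlinarith
  have hMρ : M * (2 * ρ) < ε := by
    have h1' : M * ρ ≤ M * (ε / (3 * M)) := mul_le_mul_of_nonneg_left hρε hMpos.le
    have h2' : M * (ε / (3 * M)) = ε / 3 := by field_simp
    have h3' : M * (2 * ρ) = 2 * (M * ρ) := by ring
    linarith
  have h2ρσ : 2 * ρ ≤ σ := by linarith
  have hρ2ε : ρ ≤ 2 * ε := by nlinarith
  -- the key quantitative estimate
  have key : ∀ n, dist (z n) zinf < ρ → dist (w n) winf < ε → ∀ x ∈ ball zinf ρ,
      dist (Sinf x) (S n x) ≤ (M * dist zinf (z n) + dist (w n) winf) * Real.exp (L * ρ) := by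
    intro n hzn hwn
    obtain ⟨hSd, hS0, hSder⟩ := hS n
    obtain ⟨hId, hI0, hIder⟩ := hSinf
    -- a priori bounds for S n and Sinf
    have apn : ∀ ζ ∈ ball (z n) (2 * ρ), ‖S n ζ - w n‖ ≤ M * ‖ζ - z n‖ := by
      apply apriori_bound hMpos.le hεpos hMρ hS0
      · intro ζ hζ
        exact hSder ζ (mem_ball.2 (lt_of_lt_of_le (mem_ball.1 hζ) h2ρσ))
      · intro x ζ hx hζ
        apply hMC
        · calc dist x winf ≤ dist x (w n) + dist (w n) winf := dist_triangle _ _ _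
            _ ≤ ε + ε := add_le_add (by rwa [dist_eq_norm]) hwn.le
            _ ≤ 3 * ε := by linarith
        · calc dist ζ zinf ≤ dist ζ (z n) + dist (z n) zinf := dist_triangle _ _ _
            _ ≤ 2 * ρ + ρ := add_le_add (mem_ball.1 hζ).le hzn.le
            _ ≤ 3 * ε := by linarith
    have api : ∀ ζ ∈ ball zinf (2 * ρ), ‖Sinf ζ - winf‖ ≤ M * ‖ζ - zinf‖ := by
      apply apriori_bound hMpos.le hεpos hMρ hI0
      · intro ζ hζ
        exact hIder ζ (mem_ball.2 (lt_of_lt_of_le (mem_ball.1 hζ) h2ρσ))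
      · intro x ζ hx hζ
        apply hMC
        · rw [dist_eq_norm]; linarith [hx]
        · calc dist ζ zinf ≤ 2 * ρ := (mem_ball.1 hζ).le
            _ ≤ 3 * ε := by linarith
    -- initial gap at zinf
    have hδbd : ‖S n zinf - winf‖ ≤ M * dist zinf (z n) + dist (w n) winf := by
      have hz2 : zinf ∈ ball (z n) (2 * ρ) := mem_ball.2 (by
        rw [dist_comm]; linarith)
      have h1' := apn zinf hz2
      calc ‖S n zinf - winf‖ = dist (S n zinf) winf := (dist_eq_norm _ _).symm
        _ ≤ dist (S n zinf) (w n) + dist (w n) winf := dist_triangle _ _ _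
        _ ≤ M * dist zinf (z n) + dist (w n) winf := by
            have h2' : dist (S n zinf) (w n) ≤ M * dist zinf (z n) := by
              rw [dist_eq_norm, dist_eq_norm]
              exact h1'
            linarith
    intro x hx
    have hxρ : dist x zinf < ρ := mem_ball.1 hx
    set γ : ℝ → ℂ := fun t => zinf + t • (x - zinf) with hγ
    have hγρ : ∀ t ∈ Icc (0 : ℝ) 1, dist (γ t) zinf < ρ := fun t ht =>
      lt_of_le_of_lt (seg_dist zinf x ht) hxρ
    have hγn : ∀ t ∈ Icc (0 : ℝ) 1, dist (γ t) (z n) < 2 * ρ := by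
      intro t ht
      calc dist (γ t) (z n) ≤ dist (γ t) zinf + dist zinf (z n) := dist_triangle _ _ _
        _ < ρ + ρ := by
            rw [dist_comm zinf (z n)]
            exact add_lt_add (hγρ t ht) hzn
        _ = 2 * ρ := by ring
    set g : ℝ → ℂ := fun t => S n (γ t) - Sinf (γ t) with hgdef
    have hgder : ∀ t ∈ Icc (0 : ℝ) 1, HasDerivAt g
        ((x - zinf) • F (S n (γ t)) (γ t) - (x - zinf) • F (Sinf (γ t)) (γ t)) t := by
      intro t ht
      have hd1 : HasDerivAt (fun t => S n (γ t)) ((x - zinf) • F (S n (γ t)) (γ t)) t := by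
        have := HasDerivAt.scomp (h := γ) (x := t)
          (hSder (γ t) (mem_ball.2 (lt_of_lt_of_le (hγn t ht) h2ρσ))) (seg_der zinf x t)
        exact this
      have hd2 : HasDerivAt (fun t => Sinf (γ t)) ((x - zinf) • F (Sinf (γ t)) (γ t)) t := by
        have := HasDerivAt.scomp (h := γ) (x := t)
          (hIder (γ t) (mem_ball.2 (lt_of_lt_of_le (hγρ t ht) (by linarith)))) (seg_der zinf x t)
        exact this
      exact hd1.sub hd2
    have hgc : ContinuousOn g (Icc (0 : ℝ) 1) := fun t ht =>
      ((hgder t ht).continuousAt).continuousWithinAt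
    have hg0 : ‖g 0‖ ≤ M * dist zinf (z n) + dist (w n) winf := by
      have hγ0 : γ 0 = zinf := by simp [hγ]
      rw [hgdef]
      simp only [hγ0, hI0]
      exact hδbd
    have hbound : ∀ t ∈ Ico (0 : ℝ) 1,
        ‖(x - zinf) • F (S n (γ t)) (γ t) - (x - zinf) • F (Sinf (γ t)) (γ t)‖
          ≤ L * ρ * ‖g t‖ + 0 := by
      intro t ht
      have ht' : t ∈ Icc (0 : ℝ) 1 := Ico_subset_Icc_self ht
      rw [← smul_sub, norm_smul]
      have ha1 : S n (γ t) ∈ closedBall winf (2 * ε) := by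
        rw [mem_closedBall]
        have h1' := apn (γ t) (mem_ball.2 (hγn t ht'))
        have h2' : M * ‖γ t - z n‖ ≤ M * (2 * ρ) := by
          apply mul_le_mul_of_nonneg_left _ hMpos.le
          rw [← dist_eq_norm]
          exact (hγn t ht').le
        calc dist (S n (γ t)) winf ≤ dist (S n (γ t)) (w n) + dist (w n) winf :=
              dist_triangle _ _ _
          _ ≤ M * (2 * ρ) + ε := add_le_add (by
              rw [dist_eq_norm]; linarith) hwn.le
          _ ≤ 2 * ε := by linarith
      have ha2 : Sinf (γ t) ∈ closedBall winf (2 * ε) := by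
        rw [mem_closedBall]
        have h1' := api (γ t) (mem_ball.2 (lt_of_lt_of_le (hγρ t ht') (by linarith)))
        have h2' : M * ‖γ t - zinf‖ ≤ M * (2 * ρ) := by
          apply mul_le_mul_of_nonneg_left _ hMpos.le
          rw [← dist_eq_norm]
          linarith [hγρ t ht']
        rw [dist_eq_norm]
        linarith
      have hLp := hLip (γ t) (le_trans (hγρ t ht').le hρ2ε) _ ha1 _ ha2
      calc ‖x - zinf‖ * ‖F (S n (γ t)) (γ t) - F (Sinf (γ t)) (γ t)‖
          ≤ ‖x - zinf‖ * (L * ‖S n (γ t) - Sinf (γ t)‖) :=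
            mul_le_mul_of_nonneg_left hLp (norm_nonneg _)
        _ ≤ ρ * (L * ‖S n (γ t) - Sinf (γ t)‖) := by
            apply mul_le_mul_of_nonneg_right _ (by positivity)
            rw [← dist_eq_norm]
            exact hxρ.le
        _ = L * ρ * ‖g t‖ + 0 := by rw [hgdef]; ring
    have hgr := norm_le_gronwallBound_of_norm_deriv_right_le hgc
      (fun t ht => (hgder t (Ico_subset_Icc_self ht)).hasDerivWithinAt)
      hg0 hbound 1 (right_mem_Icc.2 zero_le_one)
    rw [gronwallBound_ε0] at hgr
    have hγ1 : γ 1 = x := by simp [hγ]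
    have hg1 : g 1 = S n x - Sinf x := by rw [hgdef]; simp [hγ1]
    rw [hg1] at hgr
    rw [dist_eq_norm, norm_sub_rev]
    calc ‖S n x - Sinf x‖
        ≤ (M * dist zinf (z n) + dist (w n) winf) * Real.exp (L * ρ * (1 - 0)) := hgr
      _ = (M * dist zinf (z n) + dist (w n) winf) * Real.exp (L * ρ) := by norm_num
  -- conclude with uniform convergence on ball zinf ρ
  refine ⟨h1, ρ, hρpos, ?_⟩
  apply TendstoUniformlyOn.tendstoLocallyUniformlyOn
  rw [Metric.tendstoUniformlyOn_iff]
  intro η hη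
  have t1 : Tendsto (fun n => dist zinf (z n)) atTop (𝓝 0) := by
    have := Tendsto.dist (tendsto_const_nhds : Tendsto (fun _ : ℕ => zinf) atTop (𝓝 zinf)) hzlim
    simpa using this
  have t2 : Tendsto (fun n => dist (w n) winf) atTop (𝓝 0) := by
    have := Tendsto.dist hwlim (tendsto_const_nhds : Tendsto (fun _ : ℕ => winf) atTop (𝓝 winf))
    simpa using this
  have hδlim : Tendsto (fun n => (M * dist zinf (z n) + dist (w n) winf) * Real.exp (L * ρ))
      atTop (𝓝 0) := by
    have := ((t1.const_mul M).add t2).mul_const (Real.exp (L * ρ))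
    simpa using this
  filter_upwards [hδlim.eventually (gt_mem_nhds hη),
    hzlim (Metric.ball_mem_nhds zinf hρpos),
    hwlim (Metric.ball_mem_nhds winf hεpos)] with n h1n h2n h3n
  intro x hx
  have h2n' : dist (z n) zinf < ρ := mem_ball.1 h2n
  have h3n' : dist (w n) winf < ε := mem_ball.1 h3n
  exact lt_of_le_of_lt (key n h2n' h3n' x hx) h1n
end
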